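/- arXiv:1904.05295 — 10 statements merged into one kernel-verified Lean document; each statement's English description precedes it below -/
import Mathlib

section
/- Hölder's theorem on the line: Let Γ be a group (under composition) of orientation-preserving homeomorphisms of ℝ, i.e. of strictly increasing continuous bijections of ℝ, and assume Γ acts freely on ℝ, meaning that every element of Γ other than the identity has no fixed point. Then Γ is isomorphic to a subgroup of the additive group (ℝ, +); equivalently, there exists an injective group homomorphism from Γ into (ℝ, +). -/
/-!
A free action by continuous maps moves every point in the same direction: for `g ≠ 1` either
`g x < x` for all `x` or `x < g x` for all `x` (intermediate value theorem). Hence `g 0 ≤ h 0`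
forces `g ≤ h` pointwise, and comparing values at `0` is a total order on `Γ` invariant under
multiplication on both sides. It is archimedean, since a bounded increasing orbit of a continuous
map would converge to a fixed point.

An archimedean bi-ordered group is abelian (Hölder): if there is a least element `a > 1`, every
element is a power of `a`; otherwise every `c > 1` dominates some `d * d` with `d > 1`, and
sandwiching `x` and `y` between consecutive powers of `d` shows `(y * x)⁻¹ * (x * y) < d * d`,
so the commutator cannot be `> 1`. Finally an archimedean linearly ordered abelian group embeds
into `ℝ`.
-/

open Function Filter Topology

section Biordered

variable {G : Type*} [Group G] [LinearOrder G] [MulLeftMono G]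

theorem zpow_strictMono_of_one_lt {a : G} (ha : 1 < a) : StrictMono fun n : ℤ ↦ a ^ n :=
  strictMono_int_of_lt_succ fun n ↦ by
    rw [zpow_add_one]
    exact lt_mul_of_one_lt_right' _ ha

variable [MulRightMono G]

theorem exists_zpow_le_lt_zpow_succ (harch : ∀ (x : G) {y : G}, 1 < y → ∃ n : ℕ, x ≤ y ^ n)
    {a : G} (ha : 1 < a) (g : G) : ∃ m : ℤ, a ^ m ≤ g ∧ g < a ^ (m + 1) := by
  obtain ⟨k, hk⟩ := harch g⁻¹ ha
  obtain ⟨l, hl⟩ := harch g ha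
  have hbdd : ∀ m : ℤ, a ^ m ≤ g → m ≤ l := fun m hm ↦
    (zpow_strictMono_of_one_lt ha).le_iff_le.mp (by rw [zpow_natCast]; exact hm.trans hl)
  obtain ⟨m, hm, hmax⟩ := Int.exists_greatest_of_bdd ⟨l, hbdd⟩
    ⟨-k, by rw [zpow_neg, zpow_natCast]; exact inv_le_of_inv_le' hk⟩
  exact ⟨m, hm, lt_of_not_ge fun h ↦ (hmax (m + 1) h).not_gt (lt_add_one m)⟩

theorem eq_zpow_of_forall_one_lt_le (harch : ∀ (x : G) {y : G}, 1 < y → ∃ n : ℕ, x ≤ y ^ n)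
    {a : G} (ha : 1 < a) (hmin : ∀ b, 1 < b → a ≤ b) (g : G) : ∃ m : ℤ, g = a ^ m := by
  obtain ⟨m, hle, hlt⟩ := exists_zpow_le_lt_zpow_succ harch ha g
  have hlower : 1 ≤ (a ^ m)⁻¹ * g := le_inv_mul_iff_mul_le.mpr (by rwa [mul_one])
  have hupper : (a ^ m)⁻¹ * g < a := inv_mul_lt_iff_lt_mul.mpr (by rwa [← zpow_add_one])
  have hone : (a ^ m)⁻¹ * g = 1 :=
    (hlower.eq_or_lt.resolve_right fun h ↦ (hmin _ h).not_gt hupper).symm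
  exact ⟨m, (inv_mul_eq_one.mp hone).symm⟩

theorem exists_mul_self_le_of_forall_exists_lt (hdense : ∀ c : G, 1 < c → ∃ b, 1 < b ∧ b < c)
    {c : G} (hc : 1 < c) : ∃ d, 1 < d ∧ d * d ≤ c := by
  obtain ⟨b, hb, hbc⟩ := hdense c hc
  have hb' : 1 < b⁻¹ * c := lt_inv_mul_iff_lt.mpr hbc
  refine ⟨min b (b⁻¹ * c), lt_min hb hb', ?_⟩
  calc min b (b⁻¹ * c) * min b (b⁻¹ * c) ≤ b * (b⁻¹ * c) :=
        mul_le_mul' (min_le_left _ _) (min_le_right _ _)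
    _ = c := mul_inv_cancel_left b c

theorem mul_le_mul_comm_of_exists_mul_self_le
    (harch : ∀ (x : G) {y : G}, 1 < y → ∃ n : ℕ, x ≤ y ^ n)
    (hsq : ∀ c : G, 1 < c → ∃ d, 1 < d ∧ d * d ≤ c) (x y : G) : x * y ≤ y * x := by
  by_contra! hlt
  obtain ⟨d, hd, hdc⟩ := hsq _ (lt_inv_mul_iff_lt.mpr hlt)
  obtain ⟨m, hxm, hxm'⟩ := exists_zpow_le_lt_zpow_succ harch hd x
  obtain ⟨n, hyn, hyn'⟩ := exists_zpow_le_lt_zpow_succ harch hd y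
  have key : (y * x)⁻¹ * (x * y) < (d ^ n * d ^ m)⁻¹ * (d ^ (m + 1) * d ^ (n + 1)) :=
    mul_lt_mul_of_le_of_lt (inv_le_inv_iff.mpr (mul_le_mul' hyn hxm))
      (mul_lt_mul_of_lt_of_le hxm' hyn'.le)
  have hpow : (d ^ n * d ^ m)⁻¹ * (d ^ (m + 1) * d ^ (n + 1)) = d ^ 2 := by group
  rw [hpow, sq] at key
  exact key.not_ge hdc

theorem mul_comm_of_archimedean (harch : ∀ (x : G) {y : G}, 1 < y → ∃ n : ℕ, x ≤ y ^ n)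
    (x y : G) : x * y = y * x := by
  by_cases hleast : ∃ a : G, 1 < a ∧ ∀ b, 1 < b → a ≤ b
  · obtain ⟨a, ha, hmin⟩ := hleast
    obtain ⟨m, rfl⟩ := eq_zpow_of_forall_one_lt_le harch ha hmin x
    obtain ⟨n, rfl⟩ := eq_zpow_of_forall_one_lt_le harch ha hmin y
    exact (Commute.zpow_zpow_self a m n).eq
  · push Not at hleast
    have hsq c (hc : 1 < c) := exists_mul_self_le_of_forall_exists_lt hleast hc
    exact le_antisymm (mul_le_mul_comm_of_exists_mul_self_le harch hsq x y)
      (mul_le_mul_comm_of_exists_mul_self_le harch hsq y x)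

theorem exists_monoidHom_real_injective_of_archimedean
    (harch : ∀ (x : G) {y : G}, 1 < y → ∃ n : ℕ, x ≤ y ^ n) :
    ∃ φ : G →* Multiplicative ℝ, Injective φ := by
  let : CommGroup G := { ‹Group G› with mul_comm := mul_comm_of_archimedean harch }
  have : IsOrderedMonoid G := { mul_le_mul_left := fun _ _ h c ↦ (mul_le_mul_iff_right c).mpr h }
  have : MulArchimedean G := ⟨harch⟩
  obtain ⟨f, hf⟩ := Archimedean.exists_orderAddMonoidHom_real_injective (Additive G)
  exact ⟨AddMonoidHom.toMultiplicativeRight f.toAddMonoidHom, hf⟩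

end Biordered

theorem forall_apply_lt_or_forall_lt_apply {f : ℝ → ℝ} (hf : Continuous f)
    (hfix : ∀ x, f x ≠ x) : (∀ x, f x < x) ∨ ∀ x, x < f x := by
  by_contra! h
  obtain ⟨⟨a, ha⟩, b, hb⟩ := h
  obtain ⟨c, hc⟩ := intermediate_value_univ b a (hf.sub continuous_id)
    ⟨sub_nonpos.mpr hb, sub_nonneg.mpr ha⟩
  exact hfix c (sub_eq_zero.mp hc)

theorem exists_le_iterate_of_forall_lt_apply {α : Type*} [ConditionallyCompleteLinearOrder α]
    [TopologicalSpace α] [OrderTopology α] {f : α → α} (hf : Continuous f)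
    (hlt : ∀ x, x < f x) (a b : α) : ∃ n, b ≤ f^[n] a := by
  by_contra! hbdd
  have hmono : Monotone fun n ↦ f^[n] a := monotone_nat_of_le_succ fun n ↦ by
    rw [iterate_succ_apply']
    exact (hlt _).le
  have hlim := tendsto_atTop_ciSup hmono ⟨b, Set.forall_mem_range.mpr fun n ↦ (hbdd n).le⟩
  exact (hlt _).ne' (isFixedPt_of_tendsto_iterate hlim hf.continuousAt)

theorem Equiv.Perm.exists_le_pow_apply {y : Equiv.Perm ℝ} (hcont : Continuous y)
    (hfix : ∀ x, y x ≠ x) {p : ℝ} (hp : p < y p) (b : ℝ) : ∃ n : ℕ, b ≤ (y ^ n) p := by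
  have hup : ∀ x, x < y x :=
    (forall_apply_lt_or_forall_lt_apply hcont hfix).resolve_left fun h ↦ (h p).not_gt hp
  simpa only [Equiv.Perm.coe_pow] using exists_le_iterate_of_forall_lt_apply hcont hup p b

section FreeAction

variable {Γ : Subgroup (Equiv.Perm ℝ)}

theorem injective_apply_of_free (hfree : ∀ g ∈ Γ, g ≠ 1 → ∀ x : ℝ, g x ≠ x) (p : ℝ) :
    Injective fun g : Γ ↦ (g : Equiv.Perm ℝ) p := by
  intro g h hgh
  by_contra hne
  refine hfree _ (Γ.mul_mem (Γ.inv_mem h.2) g.2) ?_ p ?_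
  · rwa [Ne, inv_mul_eq_one, eq_comm, ← Subtype.ext_iff]
  · simp [show (g : Equiv.Perm ℝ) p = (h : Equiv.Perm ℝ) p from hgh]

theorem apply_le_apply_of_apply_le (hcont : ∀ g ∈ Γ, Continuous (g : ℝ → ℝ))
    (hfree : ∀ g ∈ Γ, g ≠ 1 → ∀ x : ℝ, g x ≠ x) {g h : Equiv.Perm ℝ} (hg : g ∈ Γ) (hh : h ∈ Γ)
    {p : ℝ} (hp : g p ≤ h p) (x : ℝ) : g x ≤ h x := by
  obtain rfl | hne := eq_or_ne g h
  · exact le_rfl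
  have hk : g * h⁻¹ ∈ Γ := Γ.mul_mem hg (Γ.inv_mem hh)
  have hk_apply : ∀ y, (g * h⁻¹) (h y) = g y := fun y ↦ by simp
  rcases forall_apply_lt_or_forall_lt_apply (hcont _ hk) (hfree _ hk (mul_inv_eq_one.not.mpr hne))
    with hlt | hlt
  · simpa only [hk_apply] using (hlt (h x)).le
  · exact absurd hp (by simpa only [hk_apply, not_le] using hlt (h p))

end FreeAction

/-- **Hölder's theorem on the line.** A group of orientation-preserving
homeomorphisms of `ℝ` (strictly increasing continuous bijections) acting freely
on `ℝ` embeds into the additive group `(ℝ, +)`. -/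
theorem holder_theorem_line (Γ : Subgroup (Equiv.Perm ℝ))
    (hmono : ∀ g ∈ Γ, StrictMono (g : ℝ → ℝ))
    (hcont : ∀ g ∈ Γ, Continuous (g : ℝ → ℝ))
    (hfree : ∀ g ∈ Γ, g ≠ 1 → ∀ x : ℝ, g x ≠ x) :
    ∃ φ : Γ →* Multiplicative ℝ, Function.Injective φ := by
  let : LinearOrder Γ := LinearOrder.lift' (fun g : Γ ↦ (g : Equiv.Perm ℝ) 0)
    (injective_apply_of_free hfree 0)
  have : MulLeftMono Γ := ⟨fun k _ _ hgh ↦ (hmono k k.2).monotone hgh⟩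
  have : MulRightMono Γ := ⟨fun _ g h hgh ↦ apply_le_apply_of_apply_le hcont hfree g.2 h.2 hgh _⟩
  refine exists_monoidHom_real_injective_of_archimedean fun x y hy ↦ ?_
  exact (y : Equiv.Perm ℝ).exists_le_pow_apply (hcont y y.2)
    (hfree y y.2 fun h ↦ hy.ne' (Subtype.ext h)) hy ((x : Equiv.Perm ℝ) 0)
end

section
/- Hölder's theorem on the circle: Let Γ be a group (under composition) of orientation-preserving homeomorphisms of the circle ℝ/ℤ, where a homeomorphism g of ℝ/ℤ is called orientation-preserving if it admits a lift, i.e. a strictly increasing continuous map G : ℝ → ℝ with G(x+1) = G(x)+1 for all x and π ∘ G = g ∘ π, where π : ℝ → ℝ/ℤ is the quotient projection. Assume Γ acts freely on ℝ/ℤ, meaning every element of Γ other than the identity has no fixed point. Then Γ is isomorphic to a subgroup of the rotation group of the circle; equivalently, there exists an injective group homomorphism from Γ into the additive group ℝ/ℤ. -/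
/-!
Lift every element of `Γ` to a continuous degree-one lift of the circle and send it to its
translation number modulo `1`. For two such lifts `F`, `K`, the continuous function
`F ∘ K - K ∘ F` either vanishes somewhere, and then `f ∘ k` and `k ∘ f` agree at a point of the
circle, so `f` and `k` commute by freeness and `F`, `K` commute, or it has constant sign. In both
cases `τ (F * K) = τ F + τ K`: comparing `(F * K) ^ n` with `K ^ n * F ^ n` turns the bounded
defect of the quasimorphism `τ` into an equality. Two lifts of the same map differ by an integer,
so this gives a homomorphism to `ℝ/ℤ`. If `τ F` is an integer, then `F x = x + τ F` for some `x`,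
so `g` has a fixed point and is the identity.
-/

local notation "τ" => CircleDeg1Lift.translationNumber

section OrderedMonoid

variable {M : Type*} [Monoid M] [Preorder M] [MulLeftMono M] [MulRightMono M] {a b : M}

theorem mul_pow_le_pow_mul_of_mul_le (h : a * b ≤ b * a) (n : ℕ) : a * b ^ n ≤ b ^ n * a := by
  induction n with
  | zero => simp
  | succ n ih =>
    calc a * b ^ (n + 1) = a * b ^ n * b := by rw [pow_succ, mul_assoc]
      _ ≤ b ^ n * (a * b) := (mul_le_mul_left ih b).trans_eq (mul_assoc _ _ _)
      _ ≤ b ^ n * (b * a) := mul_le_mul_right h _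
      _ = b ^ (n + 1) * a := by rw [pow_succ, mul_assoc]

theorem mul_pow_le_pow_mul_pow_of_mul_le (h : a * b ≤ b * a) (n : ℕ) :
    (a * b) ^ n ≤ b ^ n * a ^ n := by
  induction n with
  | zero => simp
  | succ n ih =>
    calc (a * b) ^ (n + 1) = a * b * (a * b) ^ n := pow_succ' _ _
      _ ≤ a * b * (b ^ n * a ^ n) := mul_le_mul_right ih _
      _ = a * b ^ (n + 1) * a ^ n := by rw [pow_succ', mul_assoc, mul_assoc, mul_assoc]
      _ ≤ b ^ (n + 1) * a * a ^ n := mul_le_mul_left (mul_pow_le_pow_mul_of_mul_le h _) _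
      _ = b ^ (n + 1) * a ^ (n + 1) := by rw [mul_assoc, ← pow_succ']

theorem pow_mul_pow_le_mul_pow_of_mul_le (h : a * b ≤ b * a) (n : ℕ) :
    a ^ n * b ^ n ≤ (b * a) ^ n :=
  -- in the order dual, `h` reads `b * a ≤ a * b`
  mul_pow_le_pow_mul_pow_of_mul_le (M := Mᵒᵈ) (a := b) (b := a) h n

end OrderedMonoid

theorem nonpos_of_forall_nat_mul_le {K : Type*} [Field K] [LinearOrder K] [IsStrictOrderedRing K]
    [Archimedean K] {c C : K} (h : ∀ n : ℕ, n * c ≤ C) : c ≤ 0 := by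
  by_contra! hc
  obtain ⟨n, hn⟩ := exists_nat_gt (C / c)
  exact (h n).not_gt ((div_lt_iff₀ hc).1 hn)

namespace CircleDeg1Lift

instance : MulLeftMono CircleDeg1Lift := ⟨fun f _ _ h x => f.monotone (h x)⟩

instance : MulRightMono CircleDeg1Lift := ⟨fun f _ _ h x => h (f x)⟩

theorem abs_translationNumber_mul_sub_le (f g : CircleDeg1Lift) :
    |τ (f * g) - (τ f + τ g)| ≤ 4 := by
  have hfg := (f * g).dist_map_zero_translationNumber_le
  have hf := f.dist_map_zero_translationNumber_le
  have hg := g.dist_map_zero_translationNumber_le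
  have hmul := f.dist_map_map_zero_lt g
  rw [Real.dist_eq, abs_le] at hfg hf hg
  rw [Real.dist_eq, abs_lt] at hmul
  rw [mul_apply] at hfg
  rw [abs_le]
  constructor <;> linarith

theorem translationNumber_mul_comm (f g : CircleDeg1Lift) : τ (f * g) = τ (g * f) :=
  (translationNumber_eq_of_semiconjBy (mul_assoc f g f).symm).symm

theorem translationNumber_mul_of_mul_le {f g : CircleDeg1Lift} (h : f * g ≤ g * f) :
    τ (f * g) = τ f + τ g := by
  have upper : ∀ n : ℕ, n * (τ (f * g) - (τ f + τ g)) ≤ 4 := fun n => by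
    have hmono := translationNumber_mono (mul_pow_le_pow_mul_pow_of_mul_le h n)
    have hquasi := (abs_le.1 (abs_translationNumber_mul_sub_le (g ^ n) (f ^ n))).2
    simp only [translationNumber_pow] at hmono hquasi
    linarith
  have lower : ∀ n : ℕ, n * (τ f + τ g - τ (f * g)) ≤ 4 := fun n => by
    have hmono := translationNumber_mono (pow_mul_pow_le_mul_pow_of_mul_le h n)
    have hquasi := (abs_le.1 (abs_translationNumber_mul_sub_le (f ^ n) (g ^ n))).1
    simp only [translationNumber_pow, translationNumber_mul_comm g f] at hmono hquasi
    linarith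
  linarith [nonpos_of_forall_nat_mul_le upper, nonpos_of_forall_nat_mul_le lower]

theorem translationNumber_eq_int_add {f g : CircleDeg1Lift} {n : ℤ} (h : ∀ x, f x = n + g x) :
    τ f = n + τ g := by
  set t : CircleDeg1Lift := ↑(translate (Multiplicative.ofAdd (n : ℝ)))
  have hf : f = t * g := ext fun x => by simp [t, h]
  have hcomm : Commute t g := commute_iff_commute.2 fun x => by simp [t, g.map_int_add]
  rw [hf, translationNumber_mul_of_commute hcomm, translationNumber_translate]

theorem exists_int_eq_add_of_coe_eq {f g : CircleDeg1Lift} (hf : Continuous f)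
    (hg : Continuous g) (h : ∀ x : ℝ, (f x : AddCircle (1 : ℝ)) = g x) :
    ∃ n : ℤ, ∀ x, f x = n + g x := by
  have hmem : ∀ x, f x - g x ∈ AddSubgroup.zmultiples (1 : ℝ) := fun x =>
    (QuotientAddGroup.eq_iff_sub_mem).1 (h x)
  obtain ⟨n, hn⟩ := AddSubgroup.mem_zmultiples_iff.1 (hmem 0)
  refine ⟨n, fun x => ?_⟩
  have hconst : f x - g x = f 0 - g 0 :=
    isPreconnected_univ.constant_of_mapsTo (isDiscrete_iff_discreteTopology.2
      (inferInstanceAs (DiscreteTopology (AddSubgroup.zmultiples (1 : ℝ)))))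
      (hf.sub hg).continuousOn (fun y _ => hmem y) trivial trivial
  simp only [zsmul_eq_mul, mul_one] at hn
  linarith


theorem coe_translationNumber_eq_of_coe_eq {f g : CircleDeg1Lift} (hf : Continuous f)
    (hg : Continuous g) (h : ∀ x : ℝ, (f x : AddCircle (1 : ℝ)) = g x) :
    (τ f : AddCircle (1 : ℝ)) = τ g := by
  obtain ⟨n, hn⟩ := exists_int_eq_add_of_coe_eq hf hg h
  have hn0 : ((n : ℝ) : AddCircle (1 : ℝ)) = 0 := (AddCircle.coe_eq_zero_iff 1).2 ⟨n, by simp⟩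
  rw [translationNumber_eq_int_add hn, AddCircle.coe_add, hn0, zero_add]

protected theorem continuous_mul {f g : CircleDeg1Lift} (hf : Continuous f) (hg : Continuous g) :
    Continuous (f * g) := by
  rw [coe_mul]
  exact hf.comp hg

theorem commute_of_mul_apply_eq {F K : CircleDeg1Lift} {f k : AddCircle (1 : ℝ) → AddCircle (1 : ℝ)}
    (hF : Continuous F) (hK : Continuous K) (hf : ∀ x : ℝ, (F x : AddCircle (1 : ℝ)) = f x)
    (hk : ∀ x : ℝ, (K x : AddCircle (1 : ℝ)) = k x)
    (hcomm : ∀ p, f (k p) = k (f p) → Function.Commute f k) {y : ℝ}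
    (hy : (F * K) y = (K * F) y) : Commute F K := by
  have hproj : ∀ x : ℝ, ((F * K) x : AddCircle (1 : ℝ)) = f (k x) := fun x => by
    rw [mul_apply, hf, hk]
  have hproj' : ∀ x : ℝ, ((K * F) x : AddCircle (1 : ℝ)) = k (f x) := fun x => by
    rw [mul_apply, hk, hf]
  have hfk : Function.Commute f k := hcomm y (by rw [← hproj, ← hproj', hy])
  obtain ⟨n, hn⟩ := exists_int_eq_add_of_coe_eq (CircleDeg1Lift.continuous_mul hF hK)
    (CircleDeg1Lift.continuous_mul hK hF) fun x => by rw [hproj, hproj', hfk x]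
  have hn0 : (n : ℝ) = 0 := by linarith [hn y]
  exact ext fun x => by rw [hn x, hn0, zero_add]

theorem mul_le_mul_or_mul_le_mul {F K : CircleDeg1Lift}
    {f k : AddCircle (1 : ℝ) → AddCircle (1 : ℝ)} (hF : Continuous F) (hK : Continuous K)
    (hf : ∀ x : ℝ, (F x : AddCircle (1 : ℝ)) = f x) (hk : ∀ x : ℝ, (K x : AddCircle (1 : ℝ)) = k x)
    (hcomm : ∀ p, f (k p) = k (f p) → Function.Commute f k) : F * K ≤ K * F ∨ K * F ≤ F * K := by
  by_cases hcross : ∃ y, (F * K) y = (K * F) y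
  · obtain ⟨y, hy⟩ := hcross
    exact .inl (commute_of_mul_apply_eq hF hK hf hk hcomm hy).eq.le
  push Not at hcross
  have hFK := CircleDeg1Lift.continuous_mul hF hK
  have hKF := CircleDeg1Lift.continuous_mul hK hF
  rcases le_total ((F * K) 0) ((K * F) 0) with h0 | h0
  · refine .inl fun x => ?_
    by_contra! hx
    obtain ⟨y, hy⟩ := intermediate_value_univ₂ hFK hKF h0 hx.le
    exact hcross y hy
  · refine .inr fun x => ?_
    by_contra! hx
    obtain ⟨y, hy⟩ := intermediate_value_univ₂ hKF hFK h0 hx.le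
    exact hcross y hy.symm

theorem translationNumber_mul_of_commute_of_apply_eq {F K : CircleDeg1Lift}
    {f k : AddCircle (1 : ℝ) → AddCircle (1 : ℝ)} (hF : Continuous F) (hK : Continuous K)
    (hf : ∀ x : ℝ, (F x : AddCircle (1 : ℝ)) = f x) (hk : ∀ x : ℝ, (K x : AddCircle (1 : ℝ)) = k x)
    (hcomm : ∀ p, f (k p) = k (f p) → Function.Commute f k) : τ (F * K) = τ F + τ K := by
  rcases mul_le_mul_or_mul_le_mul hF hK hf hk hcomm with h | h
  · exact translationNumber_mul_of_mul_le h
  · rw [translationNumber_mul_comm, translationNumber_mul_of_mul_le h, add_comm]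

end CircleDeg1Lift

open CircleDeg1Lift

theorem Equiv.Perm.commute_of_apply_eq_of_free {α : Type*} {Γ : Subgroup (Equiv.Perm α)}
    (hfree : ∀ g ∈ Γ, g ≠ 1 → ∀ x, g x ≠ x) {f k : Equiv.Perm α} (hf : f ∈ Γ) (hk : k ∈ Γ)
    {p : α} (hp : f (k p) = k (f p)) : Function.Commute f k := by
  have hone : (k * f)⁻¹ * (f * k) = 1 := by
    by_contra hne
    refine hfree _ (Γ.mul_mem (Γ.inv_mem (Γ.mul_mem hk hf)) (Γ.mul_mem hf hk)) hne p ?_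
    simp [Equiv.Perm.mul_apply, hp]
  intro x
  rw [inv_mul_eq_one] at hone
  exact (congrFun (congrArg DFunLike.coe hone) x).symm

/-- **Hölder's theorem on the circle.** A group of orientation-preserving
homeomorphisms of the circle `ℝ/ℤ` (each admitting a strictly increasing
continuous lift `G : ℝ → ℝ` with `G (x+1) = G x + 1` projecting to it) acting
freely on the circle embeds into the rotation group, i.e. the additive group
`ℝ/ℤ`. -/
theorem holder_theorem_circle (Γ : Subgroup (Equiv.Perm (AddCircle (1 : ℝ))))
    (hlift : ∀ g ∈ Γ, ∃ G : ℝ → ℝ, StrictMono G ∧ Continuous G ∧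
      (∀ x : ℝ, G (x + 1) = G x + 1) ∧
      (∀ x : ℝ, ((G x : ℝ) : AddCircle (1 : ℝ)) = g ((x : ℝ) : AddCircle (1 : ℝ))))
    (hfree : ∀ g ∈ Γ, g ≠ 1 → ∀ x : AddCircle (1 : ℝ), g x ≠ x) :
    ∃ φ : Γ →* Multiplicative (AddCircle (1 : ℝ)), Function.Injective φ := by
  have hlift' : ∀ g : Γ, ∃ F : CircleDeg1Lift, Continuous F ∧
      ∀ x : ℝ, (F x : AddCircle (1 : ℝ)) = (g : Equiv.Perm (AddCircle (1 : ℝ))) x := fun g => by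
    obtain ⟨G, hmono, hcont, hadd, hproj⟩ := hlift g g.2
    exact ⟨⟨⟨G, hmono.monotone⟩, hadd⟩, hcont, hproj⟩
  choose L hLc hL using hlift'
  have rotation_mul : ∀ f k : Γ,
      (τ (L (f * k)) : AddCircle (1 : ℝ)) = τ (L f) + τ (L k) := fun f k => by
    have hprod : ∀ x : ℝ, (L (f * k) x : AddCircle (1 : ℝ)) = (L f * L k) x := fun x => by
      rw [hL, mul_apply, hL, hL]
      rfl
    rw [coe_translationNumber_eq_of_coe_eq (hLc _) (CircleDeg1Lift.continuous_mul (hLc f) (hLc k))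
      hprod, translationNumber_mul_of_commute_of_apply_eq (hLc f) (hLc k) (hL f) (hL k)
      fun _ hp => Equiv.Perm.commute_of_apply_eq_of_free hfree f.2 k.2 hp, AddCircle.coe_add]
  refine ⟨MonoidHom.mk' (fun g => Multiplicative.ofAdd (τ (L g) : AddCircle (1 : ℝ))) rotation_mul,
    (injective_iff_map_eq_one _).2 fun g hg => ?_⟩
  replace hg : (τ (L g) : AddCircle (1 : ℝ)) = 0 := ofAdd_eq_one.1 hg
  obtain ⟨x, hx⟩ := (L g).exists_eq_add_translationNumber (hLc g)
  by_contra hne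
  refine hfree g g.2 (by exact_mod_cast hne) x ?_
  rw [← hL, hx, AddCircle.coe_add, hg, add_zero]
end

section
/- Let X be a topological space and A : X → X a continuous map which is topologically mixing: for any nonempty open sets U, V ⊆ X there exists N ∈ ℕ such that Aⁿ(U) ∩ V ≠ ∅ for all n ≥ N. Let α ∈ ℝ be irrational and let R : ℝ/ℤ → ℝ/ℤ be the rotation R(y) = y + α (mod ℤ). Then the product map F : X × (ℝ/ℤ) → X × (ℝ/ℤ), F(x, y) = (A(x), y + α), is topologically transitive: for any nonempty open sets W₁, W₂ ⊆ X × (ℝ/ℤ) there exists n ∈ ℕ with Fⁿ(W₁) ∩ W₂ ≠ ∅. -/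
/-!
Every nonempty open subset of `X × ℝ/ℤ` contains a box `U × V`. Mixing makes `Aⁿ U₁` meet `U₂` for
all `n ≥ N`, and the tail `{y + n • α : n ≥ N}` of an irrational orbit is still dense in the circle,
so one of these `n` also carries a point of `V₁` into `V₂`.
-/

open Filter Function Set

theorem AddCircle.denseRange_nsmul_coe_of_irrational {p α : ℝ} [Fact (0 < p)]
    (hα : Irrational (α / p)) : DenseRange (fun n : ℕ => n • (α : AddCircle p)) :=
  denseRange_zsmul_iff_nsmul.1 (AddCircle.denseRange_zsmul_coe_iff.2 hα)

theorem frequently_iterate_add_right_image_inter_nonempty {G : Type*} [AddGroup G]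
    [TopologicalSpace G] [ContinuousAdd G] {β : G} (hβ : DenseRange (fun n : ℕ => n • β))
    {U V : Set G} (hV : IsOpen V) (hU : U.Nonempty) (hVne : V.Nonempty) :
    ∃ᶠ n in atTop, ((· + β)^[n] '' U ∩ V).Nonempty := by
  obtain ⟨y, hy⟩ := hU
  obtain ⟨v, hv⟩ := hVne
  refine frequently_atTop.2 fun N => ?_
  set c := y + N • β
  have hpre : IsOpen ((c + ·) ⁻¹' V) := hV.preimage (continuous_const.add continuous_id)
  obtain ⟨m, hm⟩ := hβ.exists_mem_open hpre ⟨-c + v, by simpa [← add_assoc] using hv⟩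
  refine ⟨N + m, N.le_add_right m, y + (N + m) • β, ⟨y, hy, by rw [add_right_iterate_apply]⟩, ?_⟩
  rwa [add_nsmul, ← add_assoc]

theorem exists_iterate_prodMap_image_inter_nonempty {X Y : Type*} [TopologicalSpace X]
    [TopologicalSpace Y] {A : X → X} {B : Y → Y}
    (hA : ∀ U V : Set X, IsOpen U → IsOpen V → U.Nonempty → V.Nonempty →
      ∀ᶠ n in atTop, (A^[n] '' U ∩ V).Nonempty)
    (hB : ∀ U V : Set Y, IsOpen U → IsOpen V → U.Nonempty → V.Nonempty →
      ∃ᶠ n in atTop, (B^[n] '' U ∩ V).Nonempty)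
    {W₁ W₂ : Set (X × Y)} (hW₁ : IsOpen W₁) (hW₂ : IsOpen W₂)
    (hW₁ne : W₁.Nonempty) (hW₂ne : W₂.Nonempty) :
    ∃ n, ((Prod.map A B)^[n] '' W₁ ∩ W₂).Nonempty := by
  obtain ⟨⟨x₁, y₁⟩, h₁⟩ := hW₁ne
  obtain ⟨⟨x₂, y₂⟩, h₂⟩ := hW₂ne
  obtain ⟨U₁, V₁, hU₁, hV₁, hx₁, hy₁, hbox₁⟩ := isOpen_prod_iff.1 hW₁ x₁ y₁ h₁
  obtain ⟨U₂, V₂, hU₂, hV₂, hx₂, hy₂, hbox₂⟩ := isOpen_prod_iff.1 hW₂ x₂ y₂ h₂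
  obtain ⟨n, hXn, hYn⟩ := ((hA U₁ U₂ hU₁ hU₂ ⟨x₁, hx₁⟩ ⟨x₂, hx₂⟩).and_frequently
    (hB V₁ V₂ hV₁ hV₂ ⟨y₁, hy₁⟩ ⟨y₂, hy₂⟩)).exists
  refine ⟨n, (hXn.prod hYn).mono ?_⟩
  rw [← prod_inter_prod, Prod.map_iterate, ← prodMap_image_prod]
  exact inter_subset_inter (image_mono hbox₁) hbox₂

theorem mixing_times_irrational_rotation_transitive_general
    {X : Type*} [TopologicalSpace X] (A : X → X)
    (hmix : ∀ U V : Set X, IsOpen U → IsOpen V → U.Nonempty → V.Nonempty →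
      ∃ N : ℕ, ∀ n : ℕ, N ≤ n → (A^[n] '' U ∩ V).Nonempty)
    (α : ℝ) (hα : Irrational α) :
    ∀ W₁ W₂ : Set (X × AddCircle (1 : ℝ)), IsOpen W₁ → IsOpen W₂ →
      W₁.Nonempty → W₂.Nonempty →
      ∃ n : ℕ,
        (((fun p : X × AddCircle (1 : ℝ) =>
            (A p.1, p.2 + ((α : ℝ) : AddCircle (1 : ℝ))))^[n]) '' W₁ ∩ W₂).Nonempty := by
  have hdense := AddCircle.denseRange_nsmul_coe_of_irrational (p := 1) (by rwa [div_one])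
  intro W₁ W₂ hW₁ hW₂ hW₁ne hW₂ne
  exact exists_iterate_prodMap_image_inter_nonempty
    (fun U V hU hV hUne hVne => eventually_atTop.2 (hmix U V hU hV hUne hVne))
    (fun _ _ _ hV hUne hVne =>
      frequently_iterate_add_right_image_inter_nonempty hdense hV hUne hVne)
    hW₁ hW₂ hW₁ne hW₂ne

/-- The product of a topologically mixing continuous map with an irrational
rotation of the circle `ℝ/ℤ` is topologically transitive. -/
theorem mixing_times_irrational_rotation_transitive
    {X : Type*} [TopologicalSpace X] (A : X → X) (hA : Continuous A)
    (hmix : ∀ U V : Set X, IsOpen U → IsOpen V → U.Nonempty → V.Nonempty →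
      ∃ N : ℕ, ∀ n : ℕ, N ≤ n → (A^[n] '' U ∩ V).Nonempty)
    (α : ℝ) (hα : Irrational α) :
    ∀ W₁ W₂ : Set (X × AddCircle (1 : ℝ)), IsOpen W₁ → IsOpen W₂ →
      W₁.Nonempty → W₂.Nonempty →
      ∃ n : ℕ,
        (((fun p : X × AddCircle (1 : ℝ) =>
            (A p.1, p.2 + ((α : ℝ) : AddCircle (1 : ℝ))))^[n]) '' W₁ ∩ W₂).Nonempty :=
  mixing_times_irrational_rotation_transitive_general A hmix α hα
end

section
/- Let X be a topological space, f : X → X a homeomorphism, and y ∈ X. Define the ω-limit set ω(y) = ⋂_{N ∈ ℕ} closure{ fⁿ(y) : n ≥ N }. If the interior of ω(y) is nonempty, then y belongs to the interior of ω(y), and moreover ω(y) equals the closure of the forward orbit { fⁿ(y) : n ≥ 0 } of y (so that the restriction of f to ω(y) is a transitive homeomorphism, y having dense forward orbit in ω(y)). -/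
/-! A homeomorphism `f` maps `ω(y)`, and hence its interior, onto itself. If the interior is
nonempty, it is an open set meeting the closure of the orbit of `y`, so it contains some `fⁿ y`;
pulling back along `f` then puts `y` itself in the interior. Finally `ω(y)` is closed, forward
invariant and contains `y`, so it contains the closure of the orbit of `y`, and the reverse
inclusion is immediate. -/

open Set Function

section

variable {X : Type*}

def iterateTail (f : X → X) (y : X) (N : ℕ) : Set X := {x | ∃ n, N ≤ n ∧ f^[n] y = x}

lemma iterateTail_antitone (f : X → X) (y : X) : Antitone (iterateTail f y) := by
  rintro M N hMN _ ⟨n, hn, rfl⟩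
  exact ⟨n, hMN.trans hn, rfl⟩

lemma iterateTail_zero (f : X → X) (y : X) : iterateTail f y 0 = {x | ∃ n, f^[n] y = x} := by
  simp [iterateTail]

lemma image_iterateTail (f : X → X) (y : X) (N : ℕ) :
    f '' iterateTail f y N = iterateTail f y (N + 1) := by
  ext x
  constructor
  · rintro ⟨_, ⟨n, hn, rfl⟩, rfl⟩
    exact ⟨n + 1, by omega, iterate_succ_apply' f n y⟩
  · rintro ⟨_ | n, hn, rfl⟩
    · omega
    · exact ⟨f^[n] y, ⟨n, by omega, rfl⟩, (iterate_succ_apply' f n y).symm⟩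

variable [TopologicalSpace X]

def omegaLimitSet (f : X → X) (y : X) : Set X := ⋂ N, closure (iterateTail f y N)

lemma isClosed_omegaLimitSet (f : X → X) (y : X) : IsClosed (omegaLimitSet f y) :=
  isClosed_iInter fun _ => isClosed_closure

lemma omegaLimitSet_subset_closure_orbit (f : X → X) (y : X) :
    omegaLimitSet f y ⊆ closure {x | ∃ n, f^[n] y = x} :=
  iterateTail_zero f y ▸ iInter_subset _ 0

lemma Homeomorph.image_omegaLimitSet (f : X ≃ₜ X) (y : X) :
    f '' omegaLimitSet f y = omegaLimitSet f y := by
  have hclosure : Antitone fun N => closure (iterateTail f y N) :=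
    fun _ _ h => closure_mono (iterateTail_antitone f y h)
  simp only [omegaLimitSet, image_iInter f.bijective, f.image_closure, image_iterateTail]
  exact hclosure.iInter_nat_add 1

lemma Homeomorph.preimage_interior_omegaLimitSet (f : X ≃ₜ X) (y : X) :
    f ⁻¹' interior (omegaLimitSet f y) = interior (omegaLimitSet f y) := by
  rw [f.preimage_interior]
  nth_rw 1 [← f.image_omegaLimitSet y]
  rw [f.preimage_image]

lemma Homeomorph.mem_interior_omegaLimitSet (f : X ≃ₜ X) (y : X)
    (h : (interior (omegaLimitSet f y)).Nonempty) : y ∈ interior (omegaLimitSet f y) := by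
  obtain ⟨u, hu⟩ := h
  have hu₀ : u ∈ closure (iterateTail f y 0) := mem_iInter.mp (interior_subset hu) 0
  obtain ⟨_, hn, n, -, rfl⟩ := mem_closure_iff.mp hu₀ _ isOpen_interior hu
  have hfixed : IsFixedPt (preimage f^[n]) (interior (omegaLimitSet f y)) := by
    rw [preimage_iterate_eq]
    exact IsFixedPt.iterate (f.preimage_interior_omegaLimitSet y) n
  rwa [← hfixed]

lemma closure_orbit_subset_of_mapsTo {f : X → X} {s : Set X} (hs : IsClosed s)
    (hf : MapsTo f s s) {y : X} (hy : y ∈ s) : closure {x | ∃ n, f^[n] y = x} ⊆ s :=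
  closure_minimal (by rintro _ ⟨n, rfl⟩; exact hf.iterate n hy) hs

end

/-- If the `ω`-limit set `ω(y) = ⋂ N, closure {fⁿ y : n ≥ N}` of a point `y`
under a homeomorphism `f` has nonempty interior, then `y` lies in the interior
of `ω(y)` and `ω(y)` is the closure of the forward orbit of `y`. -/
theorem omega_limit_nonempty_interior_eq_orbit_closure
    {X : Type*} [TopologicalSpace X] (f : Homeomorph X X) (y : X)
    (hint : (interior (⋂ N : ℕ, closure {x : X | ∃ n : ℕ, N ≤ n ∧ (⇑f)^[n] y = x})).Nonempty) :
    y ∈ interior (⋂ N : ℕ, closure {x : X | ∃ n : ℕ, N ≤ n ∧ (⇑f)^[n] y = x}) ∧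
    (⋂ N : ℕ, closure {x : X | ∃ n : ℕ, N ≤ n ∧ (⇑f)^[n] y = x}) =
      closure {x : X | ∃ n : ℕ, (⇑f)^[n] y = x} := by
  have hy : y ∈ interior (omegaLimitSet f y) := f.mem_interior_omegaLimitSet y hint
  have hmaps : MapsTo f (omegaLimitSet f y) (omegaLimitSet f y) := fun x hx =>
    f.image_omegaLimitSet y ▸ mem_image_of_mem f hx
  exact ⟨hy, (omegaLimitSet_subset_closure_orbit f y).antisymm
    (closure_orbit_subset_of_mapsTo (isClosed_omegaLimitSet f y) hmaps (interior_subset hy))⟩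
end

section
/- Let (X, d) be a compact metric space, f : X → X a homeomorphism, and y ∈ X such that the interior of the ω-limit set ω(y) = ⋂_{N ∈ ℕ} closure{ fⁿ(y) : n ≥ N } is nonempty. Then there exists a point x in the interior of ω(y) such that ω(x) = ω(y) and α(x) = ω(y), where α(x) = ⋂_{N ∈ ℕ} closure{ f⁻ⁿ(x) : n ≥ N } is the α-limit set of x (i.e. the ω-limit set of x under f⁻¹). -/
/-!
Write `Ω = ω(y)`. As `f` and `f⁻¹` map the closed set `Ω` into itself, `ω(x) ⊆ Ω` and `α(x) ⊆ Ω`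
for `x ∈ Ω`. Conversely, the orbit of `y` visits every open set meeting `Ω` infinitely often, so
given open `W`, `V` meeting `Ω` it passes through `W` and much later through `V`, or through `V`
and much later through `W`: some point of `W` is sent into `V` by arbitrarily high iterates of
`f`, and also of `f⁻¹`. Hence, for each `V` of a countable basis and each time `N`, the points
whose forward (resp. backward) orbit visits `V` after time `N` form an open set dense in `Ω`.
By the Baire category theorem a residual set of points lies in all of them, and it meets the
nonempty open set `interior Ω`.
-/

open Set Filter Function TopologicalSpace omegaLimit

section

variable {X : Type*} [TopologicalSpace X] {g h : X → X} {y : X}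

theorem iInter_closure_iterate_eq_omegaLimit (g : X → X) (y : X) :
    ⋂ N : ℕ, closure {z | ∃ n, N ≤ n ∧ g^[n] y = z} = ω⁺ (fun n x ↦ g^[n] x) {y} := by
  ext z
  simp only [mem_iInter, mem_omegaLimit_singleton_iff_mapClusterPt,
    mapClusterPt_atTop_iff_forall_mem_closure]
  rfl

theorem frequently_iterate_mem_of_inter_omegaLimit_nonempty {V : Set X} (hV : IsOpen V)
    (hVω : (V ∩ ω⁺ (fun n x ↦ g^[n] x) {y}).Nonempty) : ∃ᶠ n in atTop, g^[n] y ∈ V := by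
  obtain ⟨z, hzV, hz⟩ := hVω
  exact (mem_omegaLimit_singleton_iff_mapClusterPt _ _ _ _).1 hz |>.frequently (hV.mem_nhds hzV)

theorem mapsTo_omegaLimit_iterate (hg : Continuous g) :
    MapsTo g (ω⁺ (fun n x ↦ g^[n] x) {y}) (ω⁺ (fun n x ↦ g^[n] x) {y}) := by
  intro z hz
  rw [mem_omegaLimit_singleton_iff_mapClusterPt] at hz ⊢
  have hshift : g ∘ (g^[·] y) = (g^[·] y) ∘ (· + 1) :=
    funext fun n ↦ (iterate_succ_apply' g n y).symm
  exact .of_comp (tendsto_add_atTop_nat 1) (hshift ▸ hz.continuousAt_comp hg.continuousAt)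

theorem mapsTo_omegaLimit_iterate_of_leftInverse (hh : Continuous h) (hhg : LeftInverse h g) :
    MapsTo h (ω⁺ (fun n x ↦ g^[n] x) {y}) (ω⁺ (fun n x ↦ g^[n] x) {y}) := by
  intro z hz
  rw [mem_omegaLimit_singleton_iff_mapClusterPt] at hz ⊢
  have hshift : (h ∘ (g^[·] y)) ∘ (· + 1) = (g^[·] y) := funext fun n ↦ by
    simp only [comp_apply, iterate_succ_apply', hhg _]
  rw [← hshift, mapClusterPt_comp, map_add_atTop_eq_nat]
  exact hz.continuousAt_comp hh.continuousAt

theorem omegaLimit_iterate_subset_of_mapsTo {S : Set X} (hS : IsClosed S) (hgS : MapsTo g S S)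
    (hy : y ∈ S) : ω⁺ (fun n x ↦ g^[n] x) {y} ⊆ S := fun _ hz ↦
  hS.mem_of_mapClusterPt ((mem_omegaLimit_singleton_iff_mapClusterPt _ _ _ _).1 hz)
    (Eventually.of_forall fun n ↦ hgS.iterate n hy)

theorem frequently_inter_preimage_iterate_nonempty {W V : Set X} (hW : IsOpen W) (hV : IsOpen V)
    (hWω : (W ∩ ω⁺ (fun n x ↦ g^[n] x) {y}).Nonempty)
    (hVω : (V ∩ ω⁺ (fun n x ↦ g^[n] x) {y}).Nonempty) :
    ∃ᶠ n in atTop, (W ∩ g^[n] ⁻¹' V).Nonempty := by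
  refine frequently_atTop.2 fun N ↦ ?_
  obtain ⟨m, hmW⟩ := (frequently_iterate_mem_of_inter_omegaLimit_nonempty hW hWω).exists
  obtain ⟨n, hn, hnV⟩ := frequently_atTop.1
    (frequently_iterate_mem_of_inter_omegaLimit_nonempty hV hVω) (N + m)
  refine ⟨n - m, by omega, g^[m] y, hmW, ?_⟩
  rwa [mem_preimage, ← iterate_add_apply, Nat.sub_add_cancel (by omega)]

theorem frequently_inter_preimage_iterate_nonempty_of_leftInverse (hhg : LeftInverse h g)
    {W V : Set X} (hW : IsOpen W) (hV : IsOpen V)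
    (hWω : (W ∩ ω⁺ (fun n x ↦ g^[n] x) {y}).Nonempty)
    (hVω : (V ∩ ω⁺ (fun n x ↦ g^[n] x) {y}).Nonempty) :
    ∃ᶠ n in atTop, (W ∩ h^[n] ⁻¹' V).Nonempty := by
  refine frequently_atTop.2 fun N ↦ ?_
  obtain ⟨m, hmV⟩ := (frequently_iterate_mem_of_inter_omegaLimit_nonempty hV hVω).exists
  obtain ⟨n, hn, hnW⟩ := frequently_atTop.1
    (frequently_iterate_mem_of_inter_omegaLimit_nonempty hW hWω) (N + m)
  refine ⟨n - m, by omega, g^[n] y, hnW, ?_⟩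
  rwa [mem_preimage, ← Nat.sub_add_cancel (show m ≤ n by omega), iterate_add_apply,
    Nat.add_sub_cancel, hhg.iterate]

theorem eventually_residual_mem_of_subset_closure {S U : Set X} (hS : IsOpen S)
    (hU : U ⊆ closure S) : ∀ᶠ x in residual X, x ∈ U → x ∈ S := by
  have hdense : Dense (S ∪ (closure U)ᶜ) := fun x ↦ by
    by_cases hx : x ∈ closure U
    · exact closure_mono subset_union_left (closure_minimal hU isClosed_closure hx)
    · exact subset_closure (Or.inr hx)
  filter_upwards [residual_of_dense_open (hS.union isClosed_closure.isOpen_compl) hdense]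
  rintro x (hxS | hxU) hx
  exacts [hxS, absurd (subset_closure hx) hxU]

theorem eventually_residual_subset_omegaLimit_iterate [SecondCountableTopology X] {k : X → X}
    (hk : Continuous k) {S : Set X}
    (htrans : ∀ W V, IsOpen W → IsOpen V → (W ∩ S).Nonempty → (V ∩ S).Nonempty →
      ∃ᶠ n in atTop, (W ∩ k^[n] ⁻¹' V).Nonempty) :
    ∀ᶠ x in residual X, x ∈ S → S ⊆ ω⁺ (fun n x ↦ k^[n] x) {x} := by
  have hbasis := isBasis_countableBasis X
  have hvisit : ∀ᶠ x in residual X, ∀ V ∈ countableBasis X, (V ∩ S).Nonempty → ∀ N : ℕ,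
      x ∈ S → x ∈ ⋃ n ≥ N, k^[n] ⁻¹' V := by
    refine (eventually_countable_ball (countable_countableBasis X)).2 fun V hVB ↦
      eventually_imp_distrib_left.2 fun hVS ↦ eventually_countable_forall.2 fun N ↦ ?_
    have hV := hbasis.isOpen hVB
    refine eventually_residual_mem_of_subset_closure
      (isOpen_biUnion fun n _ ↦ hV.preimage (hk.iterate n)) fun u hu ↦ ?_
    refine mem_closure_iff.2 fun W hW huW ↦ ?_
    obtain ⟨n, hn, p, hpW, hpV⟩ := frequently_atTop.1 (htrans W V hW hV ⟨u, huW, hu⟩ hVS) N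
    exact ⟨p, hpW, mem_iUnion₂.2 ⟨n, hn, hpV⟩⟩
  filter_upwards [hvisit] with x hx hxS z hzS
  rw [mem_omegaLimit_singleton_iff_mapClusterPt, hbasis.nhds_hasBasis.mapClusterPt_iff_frequently]
  rintro V ⟨hVB, hzV⟩
  refine frequently_atTop.2 fun N ↦ ?_
  simpa only [mem_iUnion₂, mem_preimage, exists_prop] using hx V hVB ⟨z, hzV, hzS⟩ N hxS

end

/-- In a compact metric space, if the `ω`-limit set of `y` under a
homeomorphism `f` has nonempty interior, then there is a point `x` in the
interior of `ω(y)` with `ω(x) = ω(y)` and `α(x) = ω(y)`. -/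
theorem exists_point_with_full_alpha_omega
    {X : Type*} [MetricSpace X] [CompactSpace X] (f : Homeomorph X X) (y : X)
    (hint : (interior (⋂ N : ℕ, closure {x : X | ∃ n : ℕ, N ≤ n ∧ (⇑f)^[n] y = x})).Nonempty) :
    ∃ x ∈ interior (⋂ N : ℕ, closure {x : X | ∃ n : ℕ, N ≤ n ∧ (⇑f)^[n] y = x}),
      (⋂ N : ℕ, closure {z : X | ∃ n : ℕ, N ≤ n ∧ (⇑f)^[n] x = z}) =
        (⋂ N : ℕ, closure {x : X | ∃ n : ℕ, N ≤ n ∧ (⇑f)^[n] y = x}) ∧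
      (⋂ N : ℕ, closure {z : X | ∃ n : ℕ, N ≤ n ∧ (⇑f.symm)^[n] x = z}) =
        (⋂ N : ℕ, closure {x : X | ∃ n : ℕ, N ≤ n ∧ (⇑f)^[n] y = x}) := by
  simp only [iInter_closure_iterate_eq_omegaLimit] at hint ⊢
  set Ω := ω⁺ (fun n x ↦ f^[n] x) {y}
  have hΩ : IsClosed Ω := isClosed_omegaLimit _ _ _
  have hgeneric := (eventually_residual_subset_omegaLimit_iterate (S := Ω) f.continuous
      fun _ _ ↦ frequently_inter_preimage_iterate_nonempty).and
    (eventually_residual_subset_omegaLimit_iterate (S := Ω) f.symm.continuous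
      fun _ _ ↦ frequently_inter_preimage_iterate_nonempty_of_leftInverse f.left_inv)
  obtain ⟨x, hxU, hxω, hxα⟩ := (dense_of_mem_residual hgeneric).inter_open_nonempty _
    isOpen_interior hint
  have hxΩ : x ∈ Ω := interior_subset hxU
  refine ⟨x, hxU, ?_, ?_⟩
  · exact (omegaLimit_iterate_subset_of_mapsTo hΩ (mapsTo_omegaLimit_iterate f.continuous)
      hxΩ).antisymm (hxω hxΩ)
  · exact (omegaLimit_iterate_subset_of_mapsTo hΩ
      (mapsTo_omegaLimit_iterate_of_leftInverse f.symm.continuous f.left_inv) hxΩ).antisymm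
      (hxα hxΩ)
end

section
/- Let (X, d) be a metric space, f : X → X a homeomorphism, and y ∈ X such that the interior of the ω-limit set ω(y) = ⋂_{N ∈ ℕ} closure{ fⁿ(y) : n ≥ N } is nonempty. Let x be a point in the interior of ω(y) which is positively recurrent, i.e. x ∈ ω(x), and let z ∈ X satisfy d(fⁿ(x), fⁿ(z)) → 0 as n → +∞. Then z belongs to the interior of ω(y). -/
/-!
Since `f` is a homeomorphism, `f⁻¹` maps `ω(y)`, and hence its interior `U`, into itself.
By recurrence some iterate `fⁿ x` with `n` large lies close to `x`, and for `n` large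
`fⁿ z` is close to `fⁿ x`; so `fⁿ z` lies in the open set `U` around `x`, and applying
`f⁻ⁿ` gives `z ∈ U`.
-/

open Filter Topology

def omegaSet {X : Type*} [TopologicalSpace X] (f : X → X) (y : X) : Set X :=
  ⋂ N : ℕ, closure {x : X | ∃ n : ℕ, N ≤ n ∧ f^[n] y = x}

section Topological

variable {X : Type*} [TopologicalSpace X]

theorem frequently_iterate_mem_of_mem_omegaSet {f : X → X} {x y : X} {U : Set X}
    (hx : x ∈ omegaSet f y) (hU : U ∈ 𝓝 x) : ∃ᶠ n in atTop, f^[n] y ∈ U := by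
  rw [frequently_atTop]
  intro N
  obtain ⟨_, hwU, n, hn, rfl⟩ := mem_closure_iff_nhds.mp (Set.mem_iInter.mp hx N) U hU
  exact ⟨n, hn, hwU⟩

theorem Homeomorph.preimage_omegaSet_subset (f : X ≃ₜ X) (y : X) :
    f ⁻¹' omegaSet f y ⊆ omegaSet f y := by
  intro w hw
  refine Set.mem_iInter.mpr fun N => ?_
  have hw' : w ∈ f ⁻¹' closure {x | ∃ n, N + 1 ≤ n ∧ f^[n] y = x} := Set.mem_iInter.mp hw (N + 1)
  rw [f.preimage_closure] at hw'
  refine closure_mono ?_ hw'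
  rintro a ⟨n, hn, ha⟩
  obtain ⟨m, rfl⟩ : ∃ m, n = m + 1 := ⟨n - 1, by omega⟩
  refine ⟨m, by omega, f.injective ?_⟩
  rwa [← Function.iterate_succ_apply' f m y]

theorem Homeomorph.iterate_preimage_interior_omegaSet_subset (f : X ≃ₜ X) (y : X) (n : ℕ) :
    f^[n] ⁻¹' interior (omegaSet f y) ⊆ interior (omegaSet f y) := by
  induction n with
  | zero => exact subset_rfl
  | succ n ih =>
    rw [Function.iterate_succ, Set.preimage_comp]
    calc f ⁻¹' (f^[n] ⁻¹' interior (omegaSet f y))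
        ⊆ f ⁻¹' interior (omegaSet f y) := Set.preimage_mono ih
      _ = interior (f ⁻¹' omegaSet f y) := f.preimage_interior _
      _ ⊆ interior (omegaSet f y) := interior_mono (f.preimage_omegaSet_subset y)

end Topological

theorem frequently_iterate_mem_of_mem_omegaSet_self_of_tendsto_dist {X : Type*}
    [PseudoMetricSpace X] {f : X → X} {x z : X} {U : Set X} (hU : U ∈ 𝓝 x)
    (hrec : x ∈ omegaSet f x)
    (hz : Tendsto (fun n => dist (f^[n] x) (f^[n] z)) atTop (𝓝 0)) :
    ∃ᶠ n in atTop, f^[n] z ∈ U := by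
  obtain ⟨ε, hε, hball⟩ := Metric.mem_nhds_iff.mp hU
  have hreturn : ∃ᶠ n in atTop, f^[n] x ∈ Metric.ball x (ε / 2) :=
    frequently_iterate_mem_of_mem_omegaSet hrec (Metric.ball_mem_nhds x (half_pos hε))
  have hclose : ∀ᶠ n in atTop, dist (f^[n] x) (f^[n] z) < ε / 2 :=
    hz.eventually (gt_mem_nhds (half_pos hε))
  refine (hreturn.and_eventually hclose).mono fun n ⟨hnx, hnz⟩ => hball ?_
  rw [Metric.mem_ball] at hnx ⊢
  calc dist (f^[n] z) x ≤ dist (f^[n] z) (f^[n] x) + dist (f^[n] x) x := dist_triangle _ _ _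
    _ < ε / 2 + ε / 2 := add_lt_add (by rwa [dist_comm]) hnx
    _ = ε := add_halves ε

theorem stable_point_of_recurrent_in_interior_omega_general
    {X : Type*} [MetricSpace X] (f : Homeomorph X X) (y : X)
    (x : X)
    (hx : x ∈ interior (⋂ N : ℕ, closure {x : X | ∃ n : ℕ, N ≤ n ∧ (⇑f)^[n] y = x}))
    (hrec : x ∈ ⋂ N : ℕ, closure {z : X | ∃ n : ℕ, N ≤ n ∧ (⇑f)^[n] x = z})
    (z : X)
    (hz : Filter.Tendsto (fun n : ℕ => dist ((⇑f)^[n] x) ((⇑f)^[n] z))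
      Filter.atTop (nhds 0)) :
    z ∈ interior (⋂ N : ℕ, closure {x : X | ∃ n : ℕ, N ≤ n ∧ (⇑f)^[n] y = x}) := by
  obtain ⟨n, hn⟩ := (frequently_iterate_mem_of_mem_omegaSet_self_of_tendsto_dist
    (isOpen_interior.mem_nhds hx) hrec hz).exists
  exact f.iterate_preimage_interior_omegaSet_subset y n hn

/-- Let `f` be a homeomorphism of a metric space and `y` a point whose
`ω`-limit set has nonempty interior. If `x` is a positively recurrent point in
the interior of `ω(y)` and `z` satisfies `d(fⁿ x, fⁿ z) → 0`, then `z` also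
lies in the interior of `ω(y)`. -/
theorem stable_point_of_recurrent_in_interior_omega
    {X : Type*} [MetricSpace X] (f : Homeomorph X X) (y : X)
    (hint : (interior (⋂ N : ℕ, closure {x : X | ∃ n : ℕ, N ≤ n ∧ (⇑f)^[n] y = x})).Nonempty)
    (x : X)
    (hx : x ∈ interior (⋂ N : ℕ, closure {x : X | ∃ n : ℕ, N ≤ n ∧ (⇑f)^[n] y = x}))
    (hrec : x ∈ ⋂ N : ℕ, closure {z : X | ∃ n : ℕ, N ≤ n ∧ (⇑f)^[n] x = z})
    (z : X)
    (hz : Filter.Tendsto (fun n : ℕ => dist ((⇑f)^[n] x) ((⇑f)^[n] z))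
      Filter.atTop (nhds 0)) :
    z ∈ interior (⋂ N : ℕ, closure {x : X | ∃ n : ℕ, N ≤ n ∧ (⇑f)^[n] y = x}) :=
  stable_point_of_recurrent_in_interior_omega_general f y x hx hrec z hz
end

section
/- Let F : ℝ → ℝ be a strictly increasing continuous bijection whose family of iterates is uniformly equicontinuous in both time directions: for every ε > 0 there exists δ > 0 such that for every n ∈ ℤ and all x, y ∈ ℝ, |x − y| < δ implies |Fⁿ(x) − Fⁿ(y)| < ε, where Fⁿ denotes the n-th iterate of F (the |n|-th iterate of F⁻¹ when n < 0). If F has a fixed point, then F is the identity map of ℝ. -/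
/-!
If `F x ≠ x`, then `F` or `F⁻¹` moves `x` monotonically towards the fixed point, so that orbit
converges and consecutive orbit points `Fᴺ x`, `Fᴺ⁺¹ x` become arbitrarily close. Pulling them back
by `F⁻ᴺ`, equicontinuity makes `x` and `F x` arbitrarily close, hence equal.
-/

open Equiv

namespace Equiv.Perm

variable {α : Type*} {e : Perm α}

lemma uniformEquicontinuous_zpow_inv [UniformSpace α]
    (h : UniformEquicontinuous fun n : ℤ => ⇑(e ^ n)) :
    UniformEquicontinuous fun n : ℤ => ⇑(e⁻¹ ^ n) :=
  fun U hU => (h U hU).mono fun _ hxy n => by simpa only [inv_zpow'] using hxy (-n)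

lemma apply_eq_of_cauchySeq_pow_apply [UniformSpace α] [T0Space α]
    (h : UniformEquicontinuous fun n : ℤ => ⇑(e ^ n)) {x : α}
    (hx : CauchySeq fun n : ℕ => (e ^ n) x) : e x = x := by
  refine (eq_of_uniformity fun {U} hU => ?_).symm
  obtain ⟨N, hN⟩ := cauchySeq_iff.1 hx _ (h U hU)
  have hclose := hN N le_rfl (N + 1) N.le_succ (-N)
  simpa only [pow_succ, mul_apply, zpow_neg, zpow_natCast, coe_inv, symm_apply_apply] using hclose

lemma strictMono_inv [LinearOrder α] (he : StrictMono e) : StrictMono ⇑e⁻¹ :=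
  fun a b hab => he.lt_iff_lt.1 (by simpa only [coe_inv, apply_symm_apply] using hab)

lemma apply_mem_uIcc_or_inv_apply_mem_uIcc [LinearOrder α] (he : StrictMono e) {p : α}
    (hp : e p = p) (x : α) : e x ∈ Set.uIcc x p ∨ e⁻¹ x ∈ Set.uIcc x p := by
  have hinv := strictMono_inv he
  have hinv_p : e⁻¹ p = p := inv_eq_iff_eq.2 hp.symm
  have hswap : e x ≤ x ↔ x ≤ e⁻¹ x := by
    simpa only [coe_inv, symm_apply_apply] using (hinv.le_iff_le (a := e x) (b := x)).symm
  have hswap' : x ≤ e x ↔ e⁻¹ x ≤ x := by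
    simpa only [coe_inv, symm_apply_apply] using (hinv.le_iff_le (a := x) (b := e x)).symm
  have below : x ≤ p → e x ≤ p ∧ e⁻¹ x ≤ p := fun h =>
    ⟨hp ▸ he.monotone h, hinv_p ▸ hinv.monotone h⟩
  have above : p ≤ x → p ≤ e x ∧ p ≤ e⁻¹ x := fun h =>
    ⟨hp ▸ he.monotone h, hinv_p ▸ hinv.monotone h⟩
  simp only [Set.mem_uIcc]
  rcases le_total x p with h | h <;> rcases le_total x (e x) with h' | h' <;> tauto

end Equiv.Perm

lemma cauchySeq_iterate_of_map_mem_uIcc {f : ℝ → ℝ} (hf : Monotone f) {p x : ℝ} (hp : f p = p)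
    (hx : f x ∈ Set.uIcc x p) : CauchySeq fun n => f^[n] x := by
  rcases le_total x p with hxp | hpx
  · rw [Set.uIcc_of_le hxp] at hx
    refine (tendsto_atTop_ciSup (hf.monotone_iterate_of_le_map hx.1) ⟨p, ?_⟩).cauchySeq
    rintro _ ⟨n, rfl⟩
    simpa only [Function.iterate_fixed hp] using hf.iterate n hxp
  · rw [Set.uIcc_of_ge hpx] at hx
    refine (tendsto_atTop_ciInf (hf.antitone_iterate_of_map_le hx.2) ⟨p, ?_⟩).cauchySeq
    rintro _ ⟨n, rfl⟩
    simpa only [Function.iterate_fixed hp] using hf.iterate n hpx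

theorem neutral_increasing_with_fixed_point_is_id_general
    (F : ℝ → ℝ) (hmono : StrictMono F)
    (hbij : Function.Bijective F)
    (hequi : ∀ ε > (0 : ℝ), ∃ δ > (0 : ℝ), ∀ n : ℤ, ∀ x y : ℝ, |x - y| < δ →
      |((Equiv.ofBijective F hbij ^ n : Equiv.Perm ℝ) x) -
        ((Equiv.ofBijective F hbij ^ n : Equiv.Perm ℝ) y)| < ε)
    (hfix : ∃ p : ℝ, F p = p) :
    F = id := by
  obtain ⟨p, hp⟩ := hfix
  set e : Perm ℝ := Equiv.ofBijective F hbij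
  have he : StrictMono e := hmono
  have he_equi : UniformEquicontinuous fun n : ℤ => ⇑(e ^ n) :=
    Metric.uniformEquicontinuous_iff.2 fun ε hε =>
      (hequi ε hε).imp fun _ ⟨hδ, H⟩ => ⟨hδ, fun x y hxy n => H n x y hxy⟩
  funext x
  change e x = x
  rcases e.apply_mem_uIcc_or_inv_apply_mem_uIcc he hp x with hx | hx
  · exact e.apply_eq_of_cauchySeq_pow_apply he_equi
      (cauchySeq_iterate_of_map_mem_uIcc he.monotone hp hx)
  · have hp_inv : e⁻¹ p = p := Perm.inv_eq_iff_eq.2 hp.symm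
    have hx_inv : e⁻¹ x = x := e⁻¹.apply_eq_of_cauchySeq_pow_apply
      (Perm.uniformEquicontinuous_zpow_inv he_equi)
      (cauchySeq_iterate_of_map_mem_uIcc (Perm.strictMono_inv he).monotone hp_inv hx)
    exact (Perm.inv_eq_iff_eq.1 hx_inv).symm

/-- An orientation-preserving (strictly increasing) continuous bijection of `ℝ`
whose family of iterates `{Fⁿ : n ∈ ℤ}` is uniformly equicontinuous and which
has a fixed point is the identity. -/
theorem neutral_increasing_with_fixed_point_is_id
    (F : ℝ → ℝ) (hmono : StrictMono F) (hcont : Continuous F)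
    (hbij : Function.Bijective F)
    (hequi : ∀ ε > (0 : ℝ), ∃ δ > (0 : ℝ), ∀ n : ℤ, ∀ x y : ℝ, |x - y| < δ →
      |((Equiv.ofBijective F hbij ^ n : Equiv.Perm ℝ) x) -
        ((Equiv.ofBijective F hbij ^ n : Equiv.Perm ℝ) y)| < ε)
    (hfix : ∃ p : ℝ, F p = p) :
    F = id :=
  neutral_increasing_with_fixed_point_is_id_general F hmono hbij hequi hfix
end

section
/- Let F : ℝ → ℝ be a strictly decreasing continuous bijection whose family of iterates is uniformly equicontinuous in both time directions: for every ε > 0 there exists δ > 0 such that for every n ∈ ℤ and all x, y ∈ ℝ, |x − y| < δ implies |Fⁿ(x) − Fⁿ(y)| < ε, where Fⁿ denotes the n-th iterate of F (the |n|-th iterate of F⁻¹ when n < 0). Then F is an involution: F ∘ F is the identity map of ℝ. -/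
/-!
Uniform equicontinuity of all iterates keeps the orbits of any two points at bounded distance,
and lets one transport "closeness at time `n`" back to time `0`. Apply this to the increasing
homeomorphism `G = F²`, which fixes the fixed point `p` of `F`: every orbit of `G` stays within
bounded distance of `p`, and being monotone it converges, so `Gⁿ x` and `Gⁿ (G x)` become
arbitrarily close; pulling back by `G⁻ⁿ` shows `G x = x`.
-/

open Filter Set Topology

theorem Antitone.exists_isFixedPt {α : Type*} [ConditionallyCompleteLinearOrder α]
    [TopologicalSpace α] [OrderTopology α] [DenselyOrdered α] {f : α → α}
    (hf : Antitone f) (hc : Continuous f) (a : α) : ∃ p, Function.IsFixedPt f p := by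
  rcases le_total a (f a) with h | h
  · obtain ⟨p, -, hp⟩ := exists_mem_uIcc_isFixedPt hc.continuousOn h (hf h)
    exact ⟨p, hp⟩
  · obtain ⟨p, -, hp⟩ := exists_mem_uIcc_isFixedPt hc.continuousOn (hf h) h
    exact ⟨p, hp⟩

theorem UniformEquicontinuous.exists_forall_dist_le {ι E β : Type*}
    [SeminormedAddCommGroup E] [NormedSpace ℝ E] [PseudoMetricSpace β] {f : ι → E → β}
    (hf : UniformEquicontinuous f) (x y : E) : ∃ C, ∀ i, dist (f i x) (f i y) ≤ C := by
  obtain ⟨δ, hδ, hstep⟩ := Metric.uniformEquicontinuous_iff.1 hf 1 one_pos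
  have hchain : ∀ n : ℕ, ∀ x y : E, dist x y < (n + 1) * δ →
      ∀ i, dist (f i x) (f i y) < n + 1 := by
    intro n
    induction n with
    | zero => simpa using hstep
    | succ n ih =>
      intro x y hxy i
      set z := AffineMap.lineMap x y ((n + 1 : ℝ) / (n + 2))
      have hxz : dist x z < (n + 1) * δ := by
        rw [dist_comm, dist_lineMap_left, Real.norm_of_nonneg (by positivity),
          div_mul_eq_mul_div, div_lt_iff₀ (by positivity)]
        push_cast at hxy
        nlinarith [dist_nonneg (x := x) (y := y)]
      have hzy : dist z y < δ := by
        rw [dist_lineMap_right, show 1 - (n + 1 : ℝ) / (n + 2) = 1 / (n + 2) by field_simp; ring,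
          Real.norm_of_nonneg (by positivity), div_mul_eq_mul_div, div_lt_iff₀ (by positivity)]
        push_cast at hxy
        linarith
      calc dist (f i x) (f i y) ≤ dist (f i x) (f i z) + dist (f i z) (f i y) := dist_triangle ..
        _ < (n + 1) + 1 := add_lt_add (ih x z hxz i) (hstep z y hzy i)
        _ = ((n + 1 : ℕ) : ℝ) + 1 := by push_cast; ring
  obtain ⟨n, hn⟩ := exists_nat_gt (dist x y / δ)
  refine ⟨n + 1, fun i => (hchain n x y ?_ i).le⟩
  rw [div_lt_iff₀ hδ] at hn
  nlinarith

theorem Equiv.Perm.eq_of_forall_exists_dist_zpow_lt {α : Type*} [MetricSpace α] {g : Perm α}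
    (hg : UniformEquicontinuous fun n : ℤ => ⇑(g ^ n)) {a b : α}
    (hab : ∀ δ > 0, ∃ n : ℤ, dist ((g ^ n) a) ((g ^ n) b) < δ) : a = b := by
  refine eq_of_forall_dist_le fun ε hε => ?_
  obtain ⟨δ, hδ, hback⟩ := Metric.uniformEquicontinuous_iff.1 hg ε hε
  obtain ⟨n, hn⟩ := hab δ hδ
  simpa [← Perm.mul_apply, ← zpow_add] using (hback _ _ hn (-n)).le

theorem Equiv.Perm.eq_one_of_monotone_of_uniformEquicontinuous {g : Perm ℝ} (hmono : Monotone g)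
    (hg : UniformEquicontinuous fun n : ℤ => ⇑(g ^ n)) {p : ℝ} (hp : g p = p) : g = 1 := by
  ext x
  set u : ℕ → ℝ := fun n => g^[n] x
  obtain ⟨C, hC⟩ := hg.exists_forall_dist_le x p
  have hbdd : Bornology.IsBounded (range u) := by
    refine (Metric.isBounded_iff_subset_closedBall p).2 ⟨C, range_subset_iff.2 fun n => ?_⟩
    simpa [u, Perm.coe_pow, pow_apply_eq_self_of_apply_eq_self hp] using hC n
  obtain ⟨L, hL⟩ : ∃ L, Tendsto u atTop (𝓝 L) := by
    rcases le_total x (g x) with h | h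
    · exact ⟨_, tendsto_atTop_ciSup (hmono.monotone_iterate_of_le_map h) hbdd.bddAbove⟩
    · exact ⟨_, tendsto_atTop_ciInf (hmono.antitone_iterate_of_map_le h) hbdd.bddBelow⟩
  have hconsec : Tendsto (fun n => dist (u n) (u (n + 1))) atTop (𝓝 0) := by
    simpa using hL.dist ((tendsto_add_atTop_iff_nat 1).2 hL)
  refine (eq_of_forall_exists_dist_zpow_lt hg fun δ hδ => ?_).symm
  obtain ⟨n, hn⟩ := (hconsec.eventually (gt_mem_nhds hδ)).exists
  exact ⟨n, by simpa [u, Perm.coe_pow, Function.iterate_succ_apply] using hn⟩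

/-- An orientation-reversing (strictly decreasing) continuous bijection of `ℝ`
whose family of iterates `{Fⁿ : n ∈ ℤ}` is uniformly equicontinuous is an
involution: `F ∘ F = id`. -/
theorem neutral_decreasing_is_involution
    (F : ℝ → ℝ) (hanti : StrictAnti F) (hcont : Continuous F)
    (hbij : Function.Bijective F)
    (hequi : ∀ ε > (0 : ℝ), ∃ δ > (0 : ℝ), ∀ n : ℤ, ∀ x y : ℝ, |x - y| < δ →
      |((Equiv.ofBijective F hbij ^ n : Equiv.Perm ℝ) x) -
        ((Equiv.ofBijective F hbij ^ n : Equiv.Perm ℝ) y)| < ε) :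
    F ∘ F = id := by
  set e := Equiv.ofBijective F hbij
  have he : UniformEquicontinuous fun n : ℤ => ⇑(e ^ n) :=
    Metric.uniformEquicontinuous_iff.2 fun ε hε =>
      let ⟨δ, hδ, h⟩ := hequi ε hε
      ⟨δ, hδ, fun x y hxy n => h n x y hxy⟩
  have he2 : UniformEquicontinuous fun n : ℤ => ⇑((e ^ 2) ^ n) := by
    convert he.comp (2 * ·) using 2 with n
    rw [Function.comp_apply, zpow_mul, zpow_ofNat]
  obtain ⟨p, hp⟩ := hanti.antitone.exists_isFixedPt hcont 0
  have hsq : e ^ 2 = 1 :=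
    Equiv.Perm.eq_one_of_monotone_of_uniformEquicontinuous (hanti.antitone.comp hanti.antitone)
      he2 (p := p) (by simp [sq, e, hp.eq])
  funext x
  simpa [sq, e] using congrArg (· x) hsq
end

section
/- Let F be an orientation-preserving homeomorphism of the circle ℝ/ℤ, i.e. F admits a strictly increasing continuous lift G : ℝ → ℝ with G(x+1) = G(x)+1 and π ∘ G = F ∘ π, where π : ℝ → ℝ/ℤ is the quotient projection. Suppose the family of iterates of F is uniformly equicontinuous in both time directions with respect to the standard metric d on ℝ/ℤ: for every ε > 0 there exists δ > 0 such that for every n ∈ ℤ and all x, y ∈ ℝ/ℤ, d(x, y) < δ implies d(Fⁿ(x), Fⁿ(y)) < ε. If F has a fixed point, then F is the identity map of ℝ/ℤ. -/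
/-!
Normalise the lift `H` of `F` so that it has a fixed point. If `x < H x` somewhere, let `a` be
the last fixed point of `H` below `x`; it lies in `(x - 1, x)`. Every point of `(a, x]` is pushed
to the right, so the orbit of a point `y` arbitrarily close to `a` eventually enters the
fundamental domain `(x, H x]`, which keeps circle distance at least `min (x - a) (a + 1 - H x)`
from `a = Hⁿ a`. This contradicts equicontinuity. Conjugating by `x ↦ -x` rules out `H x < x`.
-/

open Set Filter Function

theorem Monotone.exists_iterate_mem_Ioc {α : Type*} [ConditionallyCompleteLinearOrder α]
    [TopologicalSpace α] [OrderTopology α] {f : α → α} (hf : Monotone f) (hfc : Continuous f)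
    {y m : α} (hym : y ≤ m) (hlt : ∀ t ∈ Icc y m, t < f t) :
    ∃ n, f^[n] y ∈ Ioc m (f m) := by
  have hpass : ∃ n, m < f^[n] y := by
    by_contra! hle
    have hmono : Monotone fun n => f^[n] y :=
      hf.monotone_iterate_of_le_map (hlt y ⟨le_rfl, hym⟩).le
    have hbdd : BddAbove (range fun n => f^[n] y) := ⟨m, forall_mem_range.2 hle⟩
    have hfix := isFixedPt_of_tendsto_iterate (tendsto_atTop_ciSup hmono hbdd)
      hfc.continuousAt
    exact (hlt _ ⟨le_ciSup hbdd 0, ciSup_le hle⟩).ne hfix.symm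
  classical
  obtain ⟨k, hk⟩ : ∃ k, Nat.find hpass = k + 1 :=
    Nat.exists_eq_succ_of_ne_zero fun h => (Nat.find_spec hpass).not_ge (h ▸ hym)
  refine ⟨k + 1, hk ▸ Nat.find_spec hpass, ?_⟩
  rw [iterate_succ_apply']
  exact hf (not_lt.1 (Nat.find_min hpass (by omega)))

theorem Continuous.exists_fixedPt_forall_Ioc_lt_apply {f : ℝ → ℝ} (hf : Continuous f)
    {c x : ℝ} (hc : f c = c) (hcx : c ≤ x) (hx : x < f x) :
    ∃ a ∈ Ico c x, f a = a ∧ ∀ t ∈ Ioc a x, t < f t := by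
  set S := {t | f t = t} ∩ Icc c x
  have hS : IsCompact S := isCompact_Icc.inter_left (isClosed_eq hf continuous_id)
  obtain ⟨haS, hamem⟩ : sSup S ∈ S := hS.sSup_mem ⟨c, hc, le_rfl, hcx⟩
  refine ⟨sSup S, ⟨hamem.1, hamem.2.lt_of_ne fun h => hx.ne' (h ▸ haS)⟩, haS, ?_⟩
  intro t ⟨hat, htx⟩
  by_contra! hle
  obtain ⟨r, hr, hfr⟩ := intermediate_value_Icc htx (hf.sub continuous_id).continuousOn
    (show (0 : ℝ) ∈ Icc (f t - t) (f x - x) from ⟨by linarith, by linarith⟩)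
  have hrS : r ∈ S := ⟨sub_eq_zero.1 hfr, hamem.1.trans (hat.le.trans hr.1), hr.2⟩
  exact (le_csSup hS.bddAbove hrS).not_gt (hat.trans_le hr.1)

theorem uniformEquicontinuous_iterate_neg_conj {E : Type*} [SeminormedAddCommGroup E]
    {f : E → E} (hf : UniformEquicontinuous fun n : ℕ => f^[n]) :
    UniformEquicontinuous fun n : ℕ => (fun z => -f (-z))^[n] := by
  have hconj (n : ℕ) (z : E) : (fun z => -f (-z))^[n] z = -f^[n] (-z) := by
    have := (show Semiconj Neg.neg f (fun z => -f (-z)) from fun z => by simp).iterate_right n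
    simpa using (this (-z)).symm
  rw [Metric.uniformEquicontinuous_iff] at hf ⊢
  intro ε hε
  obtain ⟨δ, hδ, hclose⟩ := hf ε hε
  refine ⟨δ, hδ, fun x y hxy n => ?_⟩
  rw [hconj, hconj, dist_neg_neg]
  exact hclose _ _ (by rwa [dist_neg_neg]) n

namespace UnitAddCircle

theorem dist_coe_le_abs_sub (s t : ℝ) : dist (s : UnitAddCircle) t ≤ |s - t| := by
  rw [dist_eq_norm, ← AddCircle.coe_sub]
  exact QuotientAddGroup.norm_mk_le_norm

theorem le_dist_coe_of_le_sub {s t ε : ℝ} (h₁ : ε ≤ s - t) (h₂ : s - t ≤ 1 - ε) :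
    ε ≤ dist (s : UnitAddCircle) t := by
  rw [dist_eq_norm, ← AddCircle.coe_sub, UnitAddCircle.norm_eq]
  rcases le_or_gt (round (s - t)) 0 with h | h
  · have : (round (s - t) : ℝ) ≤ 0 := by exact_mod_cast h
    exact le_abs.2 (Or.inl (by linarith))
  · have : (1 : ℝ) ≤ round (s - t) := by exact_mod_cast h
    exact le_abs.2 (Or.inr (by linarith))

end UnitAddCircle

section Lift

variable {F : UnitAddCircle → UnitAddCircle} {H : ℝ → ℝ}

theorem not_uniformEquicontinuous_iterate (hsemi : Semiconj ((↑) : ℝ → UnitAddCircle) H F)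
    (hHm : Monotone H) (hHc : Continuous H) {a x : ℝ} (ha : H a = a) (hax : a < x)
    (hx : H x < a + 1) (hlt : ∀ t ∈ Ioc a x, t < H t) :
    ¬UniformEquicontinuous fun n : ℕ => F^[n] := by
  intro hF
  set ε := min (x - a) (a + 1 - H x)
  have hε₁ : ε ≤ x - a := min_le_left _ _
  have hε₂ : ε ≤ a + 1 - H x := min_le_right _ _
  obtain ⟨δ, hδ, hclose⟩ :=
    Metric.uniformEquicontinuous_iff.1 hF ε (lt_min (by linarith) (by linarith))
  set y := min (a + δ / 2) x
  have hay : a < y := lt_min (by linarith) hax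
  have hya : dist (y : UnitAddCircle) a < δ := by
    refine (UnitAddCircle.dist_coe_le_abs_sub y a).trans_lt ?_
    rw [abs_of_pos (sub_pos.2 hay)]
    linarith [min_le_left (a + δ / 2) x]
  obtain ⟨n, hxn, hnx⟩ := hHm.exists_iterate_mem_Ioc hHc (min_le_right _ _)
    fun t ht => hlt t ⟨hay.trans_le ht.1, ht.2⟩
  have hfar := hclose _ _ hya n
  rw [← hsemi.iterate_right n, ← hsemi.iterate_right n, iterate_fixed ha] at hfar
  exact hfar.not_ge (UnitAddCircle.le_dist_coe_of_le_sub (by linarith) (by linarith))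

theorem apply_le_self_of_semiconj_coe (hF : UniformEquicontinuous fun n : ℕ => F^[n])
    (hsemi : Semiconj ((↑) : ℝ → UnitAddCircle) H F) (hHm : StrictMono H) (hHc : Continuous H)
    (hH : ∀ x, H (x + 1) = H x + 1) {p : ℝ} (hp : H p = p) (x : ℝ) : H x ≤ x := by
  by_contra! hx
  have hper : Periodic (fun x => H x - x) 1 := fun x => by simp only [hH]; ring
  set c := p + ⌊x - p⌋
  have hc : H c = c := by
    have := hper.int_mul ⌊x - p⌋ p
    simp only [mul_one, hp, sub_self] at this
    linarith
  obtain ⟨a, ⟨hca, hax⟩, ha, hlt⟩ :=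
    hHc.exists_fixedPt_forall_Ioc_lt_apply hc (by linarith [Int.floor_le (x - p)]) hx
  have hxa : H x < a + 1 := by
    rw [← ha, ← hH]
    exact hHm (by linarith [Int.lt_floor_add_one (x - p)])
  exact not_uniformEquicontinuous_iterate hsemi hHm.monotone hHc ha hax hxa hlt hF

theorem self_le_apply_of_semiconj_coe (hF : UniformEquicontinuous fun n : ℕ => F^[n])
    (hsemi : Semiconj ((↑) : ℝ → UnitAddCircle) H F) (hHm : StrictMono H) (hHc : Continuous H)
    (hH : ∀ x, H (x + 1) = H x + 1) {p : ℝ} (hp : H p = p) (x : ℝ) : x ≤ H x := by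
  have hsemi' : Semiconj ((↑) : ℝ → UnitAddCircle) (fun x => -H (-x)) (fun z => -F (-z)) :=
    fun x => by simp only [AddCircle.coe_neg, hsemi (-x)]
  have hH' (x : ℝ) : -H (-(x + 1)) = -H (-x) + 1 := by
    have := hH (-(x + 1))
    rw [show -(x + 1) + 1 = -x by ring] at this
    linarith
  have := apply_le_self_of_semiconj_coe (uniformEquicontinuous_iterate_neg_conj hF) hsemi'
    (fun x y hxy => neg_lt_neg (hHm (neg_lt_neg hxy))) (by fun_prop) hH'
    (p := -p) (by simp [hp]) (-x)
  simpa using this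

theorem eq_id_of_semiconj_coe (hF : UniformEquicontinuous fun n : ℕ => F^[n])
    (hsemi : Semiconj ((↑) : ℝ → UnitAddCircle) H F) (hHm : StrictMono H) (hHc : Continuous H)
    (hH : ∀ x, H (x + 1) = H x + 1) {p : ℝ} (hp : H p = p) : F = id := by
  funext z
  induction z using QuotientAddGroup.induction_on with | H x => ?_
  rw [id, ← hsemi x, le_antisymm (apply_le_self_of_semiconj_coe hF hsemi hHm hHc hH hp x)
    (self_le_apply_of_semiconj_coe hF hsemi hHm hHc hH hp x)]

end Lift

/-- An orientation-preserving homeomorphism of the circle `ℝ/ℤ` (admitting a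
strictly increasing continuous lift `G` with `G (x+1) = G x + 1`) whose family
of iterates `{Fⁿ : n ∈ ℤ}` is uniformly equicontinuous and which has a fixed
point is the identity. -/
theorem neutral_circle_map_with_fixed_point_is_id
    (F : AddCircle (1 : ℝ) → AddCircle (1 : ℝ))
    (hbij : Function.Bijective F)
    (hlift : ∃ G : ℝ → ℝ, StrictMono G ∧ Continuous G ∧
      (∀ x : ℝ, G (x + 1) = G x + 1) ∧
      (∀ x : ℝ, ((G x : ℝ) : AddCircle (1 : ℝ)) = F ((x : ℝ) : AddCircle (1 : ℝ))))
    (hequi : ∀ ε > (0 : ℝ), ∃ δ > (0 : ℝ), ∀ n : ℤ, ∀ x y : AddCircle (1 : ℝ),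
      dist x y < δ →
      dist ((Equiv.ofBijective F hbij ^ n : Equiv.Perm (AddCircle (1 : ℝ))) x)
        ((Equiv.ofBijective F hbij ^ n : Equiv.Perm (AddCircle (1 : ℝ))) y) < ε)
    (hfix : ∃ p : AddCircle (1 : ℝ), F p = p) :
    F = id := by
  obtain ⟨G, hGm, hGc, hG, hsemi⟩ := hlift
  obtain ⟨p, hp⟩ := hfix
  obtain ⟨x₀, rfl⟩ := QuotientAddGroup.mk_surjective p
  have hF : UniformEquicontinuous fun n : ℕ => F^[n] := by
    refine Metric.uniformEquicontinuous_iff.2 fun ε hε => ?_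
    obtain ⟨δ, hδ, hclose⟩ := hequi ε hε
    exact ⟨δ, hδ, fun x y hxy n => by simpa [Equiv.Perm.coe_pow] using hclose n x y hxy⟩
  obtain ⟨k, hk⟩ : ∃ k : ℤ, k • (1 : ℝ) = G x₀ - x₀ := by
    rw [← AddCircle.coe_eq_zero_iff, AddCircle.coe_sub, sub_eq_zero, ← hp]
    exact hsemi x₀
  have hsemi' : Semiconj ((↑) : ℝ → UnitAddCircle) (fun x => G x - k • 1) F := fun x => by
    simp only [AddCircle.coe_sub, AddCircle.coe_zsmul, AddCircle.coe_period, smul_zero,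
      sub_zero, hsemi x]
  exact eq_id_of_semiconj_coe hF hsemi' (fun x y hxy => sub_lt_sub_right (hGm hxy) _)
    (by fun_prop) (fun x => by simp only [hG]; ring) (p := x₀) (by linarith)
end

section
/- Let S be a set, f : S → S a bijection, and p ∈ S with f(p) = p. Let e_s, e_u : [0, ∞) → S be injective maps with e_s(0) = e_u(0) = p and such that e_s(t) ≠ e_u(0) etc. only at parameter 0, i.e. e_s((0,∞)) and e_u((0,∞)) do not contain p. Assume: (i) there exist strictly increasing continuous bijections σ, τ : [0, ∞) → [0, ∞) with f(e_s(t)) = e_s(σ(t)) and f(e_u(t)) = e_u(τ(t)) for all t ≥ 0; (ii) σ(t) < t and τ(t) > t for all t > 0; (iii) for all a, b > 0 the set e_s([0, a]) ∩ e_u([0, b]) is finite. For a point x ∈ e_s((0, ∞)) ∩ e_u((0, ∞)), writing x = e_s(a) = e_u(b), define I^s_x = e_s([0, a]), I^u_x = e_u([0, b]), and n(x) = the cardinality of (I^s_x ∩ I^u_x) \ {p}. Then for every N ∈ ℕ, the set of points x ∈ e_s((0, ∞)) ∩ e_u((0, ∞)) with n(x) ≤ N consists of finitely many f-orbits: there exist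 finitely many points x₁, …, x_m ∈ e_s((0, ∞)) ∩ e_u((0, ∞)) such that every x ∈ e_s((0, ∞)) ∩ e_u((0, ∞)) with n(x) ≤ N equals f^k(x_i) for some k ∈ ℤ and some 1 ≤ i ≤ m. -/
/-!
Applying `f ^ k` to a homoclinic point `x = e_s a = e_u b` replaces `(a, b)` by `(σ^k a, τ^k b)`
and preserves `n(x)`. Since `τ` is continuous with `τ t > t`, every `b > 0` has a `τ`-iterate in
the fundamental domain `(1, τ 1]`, so it suffices to show that only finitely many stable
parameters `a` have a partner `b ∈ (1, τ 1]` with `n ≤ N`. For such an `a`, every other such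
parameter `a' ≤ σ a` gives a point of `(I^s_{f x} ∩ I^u_{f x}) \ {p}`, a set with `n(x) ≤ N`
elements; as `σ a → ∞` and the compact arcs meet in finite sets, this bounds the whole set.
-/

open scoped NNReal

open Set Function Filter Equiv

theorem Function.Semiconj.perm_zpow {α β : Type*} {e : α → β} {g : Perm α} {f : Perm β}
    (h : Semiconj e g f) : ∀ k : ℤ, Semiconj e ⇑(g ^ k) ⇑(f ^ k)
  | (n : ℕ) => by simpa only [zpow_natCast, Perm.coe_pow] using h.iterate_right n
  | .negSucc n => by
    rw [zpow_negSucc, zpow_negSucc]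
    have hn : Semiconj e ⇑(g ^ (n + 1)) ⇑(f ^ (n + 1)) := by
      simpa only [Perm.coe_pow] using h.iterate_right (n + 1)
    exact hn.inverses_right (g ^ (n + 1)).apply_symm_apply (f ^ (n + 1)).symm_apply_apply

theorem Equiv.Perm.strictMono_zpow {α : Type*} [LinearOrder α] {g : Perm α} (hg : StrictMono g) :
    ∀ k : ℤ, StrictMono ⇑(g ^ k)
  | (n : ℕ) => by simpa only [zpow_natCast, Perm.coe_pow] using hg.iterate n
  | .negSucc n => by
    have hinv : StrictMono ⇑g⁻¹ := fun x y hxy => hg.lt_iff_lt.mp (by simpa using hxy)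
    rw [zpow_negSucc, ← inv_pow, Perm.coe_pow]
    exact hinv.iterate _

theorem not_bddAbove_range_iterate {α : Type*} [ConditionallyCompleteLinearOrder α]
    [TopologicalSpace α] [OrderTopology α] {h : α → α} (hcont : Continuous h) {c : α}
    (hgt : ∀ x, c ≤ x → x < h x) : ¬BddAbove (range fun n => h^[n] c) := by
  intro hbdd
  have hc : ∀ n, c ≤ h^[n] c := by
    intro n
    induction n with
    | zero => exact le_rfl
    | succ n ih => rw [iterate_succ_apply']; exact ih.trans (hgt _ ih).le
  have hmono : Monotone fun n => h^[n] c := monotone_nat_of_le_succ fun n => by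
    rw [iterate_succ_apply']; exact (hgt _ (hc n)).le
  have hfix := isFixedPt_of_tendsto_iterate (tendsto_atTop_ciSup hmono hbdd) hcont.continuousAt
  exact (hgt _ ((hc 0).trans (le_ciSup hbdd 0))).ne' hfix

theorem Equiv.Perm.exists_zpow_apply_mem_Ioc {α : Type*} [LinearOrder α] {h : Perm α}
    (hh : StrictMono h) {c t : α} (hc : c < h c) (hup : ∃ n : ℤ, t ≤ (h ^ n) c)
    (hdown : ∃ n : ℤ, (h ^ n) c < t) : ∃ k : ℤ, (h ^ k) t ∈ Ioc c (h c) := by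
  have hmono : StrictMono fun k : ℤ => (h ^ k) c := strictMono_int_of_lt_succ fun k => by
    simpa only [zpow_add_one, Perm.mul_apply] using strictMono_zpow hh k hc
  obtain ⟨n, hn⟩ := hup
  obtain ⟨k, hk, hmax⟩ := Int.exists_greatest_of_bdd
    ⟨n, fun k hk => (hmono.lt_iff_lt.mp (hk.trans_le hn)).le⟩ hdown
  have hk1 : t ≤ (h ^ (k + 1)) c := not_lt.mp fun hlt => by linarith [hmax _ hlt]
  have hcancel : (h ^ k) ((h ^ (-k)) t) = t := by
    rw [← Perm.mul_apply, ← zpow_add, add_neg_cancel, zpow_zero, Perm.one_apply]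
  refine ⟨-k, ?_, ?_⟩
  · rwa [← (strictMono_zpow hh k).lt_iff_lt, hcancel]
  · rwa [← (strictMono_zpow hh k).le_iff_le, hcancel, ← Perm.mul_apply, ← zpow_add_one]

theorem Equiv.Perm.exists_zpow_apply_mem_Ioc_of_lt_apply {α : Type*}
    [ConditionallyCompleteLinearOrder α] [TopologicalSpace α] [OrderTopology α] {h : Perm α}
    (hh : StrictMono h) (hcont : Continuous h) {x₀ : α} (hgt : ∀ x, x₀ < x → x < h x)
    {c t : α} (hc : x₀ < c) (ht : x₀ < t) : ∃ k : ℤ, (h ^ k) t ∈ Ioc c (h c) := by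
  have hunb {y : α} (hy : x₀ < y) (z : α) : ∃ n : ℕ, z < h^[n] y := by
    obtain ⟨_, ⟨n, rfl⟩, hn⟩ := not_bddAbove_iff.mp
      (not_bddAbove_range_iterate hcont fun x hx => hgt x (hy.trans_le hx)) z
    exact ⟨n, hn⟩
  refine exists_zpow_apply_mem_Ioc hh (hgt c hc) ?_ ?_
  · obtain ⟨n, hn⟩ := hunb hc t
    exact ⟨n, by simpa only [zpow_natCast, Perm.coe_pow] using hn.le⟩
  · obtain ⟨n, hn⟩ := hunb ht c
    refine ⟨-n, (strictMono_zpow hh n).lt_iff_lt.mp ?_⟩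
    rwa [← Perm.mul_apply, ← zpow_add, add_neg_cancel, zpow_zero, Perm.one_apply, zpow_natCast,
      Perm.coe_pow]

theorem Set.finite_of_encard_inter_Iic_le {α : Type*} [LinearOrder α] {s : Set α} {φ : α → α}
    {N : ℕ} (hφ : Tendsto φ atTop atTop) (hbdd : ∀ A, (s ∩ Iic A).Finite)
    (hs : ∀ a ∈ s, (s ∩ Iic (φ a)).encard ≤ N) : s.Finite := by
  rw [← not_infinite]
  intro hinf
  have : Nonempty α := ⟨hinf.nonempty.some⟩
  obtain ⟨F, hFs, hF⟩ :=
    exists_subset_encard_eq (k := N + 1) (by rw [hinf.encard_eq]; exact le_top)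
  obtain ⟨A, hA⟩ := (finite_of_encard_eq_coe hF).bddAbove
  obtain ⟨A₀, hA₀⟩ := eventually_atTop.mp (hφ.eventually_ge_atTop A)
  obtain ⟨a, has, ha⟩ : ∃ a ∈ s, A₀ ≤ a := by
    by_contra! h
    exact hinf ((hbdd A₀).subset fun a ha => ⟨ha, (h a ha).le⟩)
  have hF_sub : F ⊆ s ∩ Iic (φ a) := fun x hx => ⟨hFs hx, (hA hx).trans (hA₀ a ha)⟩
  have := (encard_le_encard hF_sub).trans (hs a has)
  rw [hF] at this
  norm_cast at this
  omega

theorem Equiv.Perm.apply_bot_of_monotone {α : Type*} [PartialOrder α] [OrderBot α] {g : Perm α}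
    (hg : Monotone g) : g ⊥ = ⊥ :=
  le_bot_iff.mp <| (hg (bot_le (a := g.symm ⊥))).trans_eq (g.apply_symm_apply ⊥)

section Separatrices

variable {S : Type*}

noncomputable def intersectionNumber (e_s e_u : ℝ≥0 → S) (p : S) (a b : ℝ≥0) : ℕ :=
  ((e_s '' Icc 0 a ∩ e_u '' Icc 0 b) \ {p}).ncard

theorem image_image_Icc_zero {e : ℝ≥0 → S} {f : Perm S} {g : Perm ℝ≥0} (hg : StrictMono g)
    (he : Semiconj e g f) (a : ℝ≥0) : f '' (e '' Icc 0 a) = e '' Icc 0 (g a) := by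
  have hg0 : g 0 = 0 := Perm.apply_bot_of_monotone hg.monotone
  have himg : g '' Icc 0 a = Icc 0 (g a) := by
    simpa only [hg0, StrictMono.coe_orderIsoOfSurjective] using
      (hg.orderIsoOfSurjective g g.surjective).image_Icc 0 a
  rw [← image_comp, ← he.comp_eq, image_comp, himg]

variable {e_s e_u : ℝ≥0 → S} {p : S} {f : Perm S} {g h : Perm ℝ≥0}

theorem intersectionNumber_apply_apply (hg : StrictMono g) (hh : StrictMono h)
    (hs : Semiconj e_s g f) (hu : Semiconj e_u h f) (hp : f p = p) (a b : ℝ≥0) :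
    intersectionNumber e_s e_u p (g a) (h b) = intersectionNumber e_s e_u p a b := by
  unfold intersectionNumber
  rw [← image_image_Icc_zero hg hs, ← image_image_Icc_zero hh hu, ← image_inter f.injective]
  conv_lhs => rw [← hp, ← image_singleton, ← image_sdiff f.injective]
  exact ncard_image_of_injective _ f.injective

theorem finite_setOf_intersectionNumber_le (hg : StrictMono g) (hh : StrictMono h)
    (hs : Semiconj e_s g f) (hu : Semiconj e_u h f) (hp : f p = p) (hinj : Injective e_s)
    (hps : ∀ t, 0 < t → e_s t ≠ p) (hfin : ∀ a b, (e_s '' Icc 0 a ∩ e_u '' Icc 0 b).Finite)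
    (c : ℝ≥0) (N : ℕ) :
    {a | 0 < a ∧ ∃ b ∈ Ioc c (h c),
      e_s a = e_u b ∧ intersectionNumber e_s e_u p a b ≤ N}.Finite := by
  set A := {a | 0 < a ∧ ∃ b ∈ Ioc c (h c),
    e_s a = e_u b ∧ intersectionNumber e_s e_u p a b ≤ N}
  have hA {a : ℝ≥0} (ha : a ∈ A) {b : ℝ≥0} (hb : c ≤ b) : e_s a ∈ e_u '' Icc 0 (h b) := by
    obtain ⟨-, b', hb', hab', -⟩ := ha
    exact ⟨b', ⟨zero_le, hb'.2.trans (hh.monotone hb)⟩, hab'.symm⟩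
  refine finite_of_encard_inter_Iic_le (φ := g) (N := N) ?_ (fun a => ?_) fun a ha => ?_
  · exact (hg.orderIsoOfSurjective g g.surjective).tendsto_atTop
  · refine ((hfin a (h c)).preimage hinj.injOn).subset fun a' ⟨ha', ha'a⟩ => ?_
    exact ⟨mem_image_of_mem e_s ⟨zero_le, ha'a⟩, hA ha' le_rfl⟩
  · obtain ⟨-, b, hb, -, hn⟩ := ha
    calc (A ∩ Iic (g a)).encard
        = (e_s '' (A ∩ Iic (g a))).encard := (hinj.encard_image _).symm
      _ ≤ ((e_s '' Icc 0 (g a) ∩ e_u '' Icc 0 (h b)) \ {p}).encard := by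
          refine encard_le_encard ?_
          rintro _ ⟨a', ⟨ha', ha'a⟩, rfl⟩
          exact ⟨⟨mem_image_of_mem e_s ⟨zero_le, ha'a⟩, hA ha' hb.1.le⟩, hps a' ha'.1⟩
      _ = intersectionNumber e_s e_u p (g a) (h b) := ((hfin _ _).sdiff).cast_ncard_eq.symm
      _ ≤ N := by rw [intersectionNumber_apply_apply hg hh hs hu hp]; exact_mod_cast hn

end Separatrices

theorem finitely_many_orbits_of_bounded_intersection_number_general
    {S : Type*} (f : Equiv.Perm S) (p : S) (hp : f p = p)
    (e_s e_u : ℝ≥0 → S)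
    (hinj_s : Function.Injective e_s)
    (hps : ∀ t : ℝ≥0, 0 < t → e_s t ≠ p)
    (σ τ : ℝ≥0 → ℝ≥0)
    (hσ_mono : StrictMono σ) (hσ_bij : Function.Bijective σ)
    (hτ_mono : StrictMono τ) (hτ_cont : Continuous τ) (hτ_bij : Function.Bijective τ)
    (hfs : ∀ t : ℝ≥0, f (e_s t) = e_s (σ t))
    (hfu : ∀ t : ℝ≥0, f (e_u t) = e_u (τ t))
    (hτ_gt : ∀ t : ℝ≥0, 0 < t → t < τ t)
    (hfin : ∀ a b : ℝ≥0, 0 < a → 0 < b →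
      (e_s '' Set.Icc 0 a ∩ e_u '' Set.Icc 0 b).Finite) :
    ∀ N : ℕ, ∃ T : Finset S,
      (∀ x ∈ T, (∃ a : ℝ≥0, 0 < a ∧ e_s a = x) ∧ (∃ b : ℝ≥0, 0 < b ∧ e_u b = x)) ∧
      ∀ a b : ℝ≥0, 0 < a → 0 < b → e_s a = e_u b →
        ((e_s '' Set.Icc 0 a ∩ e_u '' Set.Icc 0 b) \ {p}).ncard ≤ N →
        ∃ x ∈ T, ∃ k : ℤ, e_s a = (f ^ k) x := by
  intro N
  set g := Equiv.ofBijective σ hσ_bij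
  set h := Equiv.ofBijective τ hτ_bij
  have hg : StrictMono g := hσ_mono
  have hh : StrictMono h := hτ_mono
  have hs : Semiconj e_s g f := fun t => (hfs t).symm
  have hu : Semiconj e_u h f := fun t => (hfu t).symm
  have hfin_arcs (a b : ℝ≥0) : (e_s '' Icc 0 a ∩ e_u '' Icc 0 b).Finite :=
    (hfin (a + 1) (b + 1) (by positivity) (by positivity)).subset <|
      inter_subset_inter (image_mono (Icc_subset_Icc_right le_self_add))
        (image_mono (Icc_subset_Icc_right le_self_add))
  have hA := finite_setOf_intersectionNumber_le hg hh hs hu hp hinj_s hps hfin_arcs 1 N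
  refine ⟨(hA.image e_s).toFinset, ?_, fun a b ha hb hab hn => ?_⟩
  · simp only [Finite.mem_toFinset, forall_mem_image]
    rintro a ⟨ha, b, hb, hab, -⟩
    exact ⟨⟨a, ha, rfl⟩, b, one_pos.trans hb.1, hab.symm⟩
  obtain ⟨k, hk⟩ := Perm.exists_zpow_apply_mem_Ioc_of_lt_apply hh hτ_cont hτ_gt one_pos hb
  refine ⟨e_s ((g ^ k) a),
    (Finite.mem_toFinset _).mpr ⟨_, ⟨?_, (h ^ k) b, hk, ?_, ?_⟩, rfl⟩, -k, ?_⟩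
  · have hk0 : (g ^ k) 0 = 0 := Perm.apply_bot_of_monotone (Perm.strictMono_zpow hg k).monotone
    simpa only [hk0] using Perm.strictMono_zpow hg k ha
  · rw [hs.perm_zpow, hu.perm_zpow, hab]
  · rwa [intersectionNumber_apply_apply (Perm.strictMono_zpow hg k)
      (Perm.strictMono_zpow hh k) (hs.perm_zpow k) (hu.perm_zpow k)
      (Perm.zpow_apply_eq_self_of_apply_eq_self hp k)]
  · rw [hs.perm_zpow, ← Perm.mul_apply, ← zpow_add, neg_add_cancel, zpow_zero, Perm.one_apply]

/-- Finiteness of homoclinic orbits of bounded intersection number, abstractly.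
`f` is a bijection of a set `S` fixing `p`; `e_s` and `e_u` parametrize the
stable and unstable separatrices of `p` (injective curves through `p` at
parameter `0`, avoiding `p` for positive parameters); `f` acts on them by
strictly increasing continuous reparametrizations `σ` (with `σ t < t`,
contraction) and `τ` (with `τ t > t`, expansion); and any two compact arcs
`e_s [0,a]`, `e_u [0,b]` intersect in a finite set. For a homoclinic point
`x = e_s a = e_u b` (with `a, b > 0`) the intersection number `n(x)` is the
cardinality of `(e_s [0,a] ∩ e_u [0,b]) \ {p}`. Then for every `N` the
homoclinic points with `n(x) ≤ N` form finitely many `f`-orbits. -/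
theorem finitely_many_orbits_of_bounded_intersection_number
    {S : Type*} (f : Equiv.Perm S) (p : S) (hp : f p = p)
    (e_s e_u : ℝ≥0 → S)
    (hinj_s : Function.Injective e_s) (hinj_u : Function.Injective e_u)
    (hs0 : e_s 0 = p) (hu0 : e_u 0 = p)
    (hps : ∀ t : ℝ≥0, 0 < t → e_s t ≠ p)
    (hpu : ∀ t : ℝ≥0, 0 < t → e_u t ≠ p)
    (σ τ : ℝ≥0 → ℝ≥0)
    (hσ_mono : StrictMono σ) (hσ_cont : Continuous σ) (hσ_bij : Function.Bijective σ)
    (hτ_mono : StrictMono τ) (hτ_cont : Continuous τ) (hτ_bij : Function.Bijective τ)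
    (hfs : ∀ t : ℝ≥0, f (e_s t) = e_s (σ t))
    (hfu : ∀ t : ℝ≥0, f (e_u t) = e_u (τ t))
    (hσ_lt : ∀ t : ℝ≥0, 0 < t → σ t < t)
    (hτ_gt : ∀ t : ℝ≥0, 0 < t → t < τ t)
    (hfin : ∀ a b : ℝ≥0, 0 < a → 0 < b →
      (e_s '' Set.Icc 0 a ∩ e_u '' Set.Icc 0 b).Finite) :
    ∀ N : ℕ, ∃ T : Finset S,
      (∀ x ∈ T, (∃ a : ℝ≥0, 0 < a ∧ e_s a = x) ∧ (∃ b : ℝ≥0, 0 < b ∧ e_u b = x)) ∧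
      ∀ a b : ℝ≥0, 0 < a → 0 < b → e_s a = e_u b →
        ((e_s '' Set.Icc 0 a ∩ e_u '' Set.Icc 0 b) \ {p}).ncard ≤ N →
        ∃ x ∈ T, ∃ k : ℤ, e_s a = (f ^ k) x :=
  finitely_many_orbits_of_bounded_intersection_number_general f p hp e_s e_u hinj_s hps σ τ hσ_mono
    hσ_bij hτ_mono hτ_cont hτ_bij hfs hfu hτ_gt hfin
end
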